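/- arXiv:2604.15824 — 9 statements merged into one kernel-verified Lean document; each statement's English description precedes it below -/
import Mathlib

section
/- Every connected graph of even order has a spanning subgraph in which every vertex has odd degree (an odd factor). -/
private lemma zmod_self_add {x : ZMod 2} : x + x = 0 := by fin_cases x <;> decide

private lemma odd_iff_cast (n : ℕ) : Odd n ↔ (n : ZMod 2) = 1 := by
  rw [Nat.odd_iff, ← ZMod.natCast_mod n 2]
  rcases Nat.mod_two_eq_zero_or_one n with h | h <;> rw [h] <;> simp

open Finset in
private lemma walk_deg {V : Type*} [Fintype V] [DecidableEq V] {G : SimpleGraph V}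
    {v r : V} (p : G.Walk v r) (w : V) :
    ∑ e : Sym2 V, (if w ∈ e then ((p.edges.count e : ℕ) : ZMod 2) else 0) =
      (if w = v then 1 else 0) + (if w = r then 1 else 0) := by
  induction p with
  | nil =>
      simp only [SimpleGraph.Walk.edges_nil, List.count_nil, Nat.cast_zero, ite_self,
        Finset.sum_const_zero]
      exact zmod_self_add.symm
  | @cons a b c h q ih =>
      have hne : a ≠ b := h.ne
      simp only [SimpleGraph.Walk.edges_cons, List.count_cons, beq_iff_eq]
      have hpt : ∀ e : Sym2 V,
          (if w ∈ e then ((q.edges.count e + if s(a, b) = e then 1 else 0 : ℕ) : ZMod 2) else 0)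
          = (if w ∈ e then ((q.edges.count e : ℕ) : ZMod 2) else 0)
            + (if s(a, b) = e then (if w ∈ e then 1 else 0) else 0) := by
        intro e
        by_cases hw : w ∈ e <;> by_cases he : s(a, b) = e <;>
          simp only [hw, he, if_true, if_false, ite_true, ite_false, if_pos, if_neg,
            not_false_iff] <;> push_cast <;> ring
      rw [Finset.sum_congr rfl (fun e _ => hpt e), Finset.sum_add_distrib, ih,
        Finset.sum_ite_eq Finset.univ (s(a, b)) (fun e => if w ∈ e then (1 : ZMod 2) else 0)]
      simp only [Finset.mem_univ, if_true, Sym2.mem_iff]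
      have hmem : (if w = a ∨ w = b then (1 : ZMod 2) else 0)
          = (if w = a then 1 else 0) + (if w = b then 1 else 0) := by
        by_cases ha : w = a <;> by_cases hb : w = b
        · exact absurd (ha ▸ hb) hne
        all_goals simp [ha, hb, hne, Ne.symm hne]
      rw [hmem]
      exact (by decide : ∀ x y z : ZMod 2, (y + z) + (x + y) = x + z) _ _ _

/-- Every connected graph of even order has an odd factor: a spanning subgraph
(given by an edge set `F`) in which every vertex has odd degree. -/
theorem stmt0 {V : Type*} [Fintype V] (G : SimpleGraph V)
    (hG : G.Connected) (hV : Even (Fintype.card V)) :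
    ∃ F ⊆ G.edgeSet, ∀ v : V, Odd {e : Sym2 V | e ∈ F ∧ v ∈ e}.ncard := by
  classical
  obtain ⟨r⟩ := hG.nonempty
  have hw : ∀ v : V, ∃ p : G.Walk v r, True := fun v => ⟨(hG.preconnected v r).some, trivial⟩
  choose p _ using hw
  set c : Sym2 V → ZMod 2 := fun e => ∑ v : V, (((p v).edges.count e : ℕ) : ZMod 2) with hc
  have hdeg : ∀ w : V, ∑ e : Sym2 V, (if w ∈ e then c e else 0) = 1 := by
    intro w
    have h1 : ∑ e : Sym2 V, (if w ∈ e then c e else 0)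
        = ∑ v : V, ∑ e : Sym2 V, (if w ∈ e then (((p v).edges.count e : ℕ) : ZMod 2) else 0) := by
      rw [Finset.sum_comm]
      refine Finset.sum_congr rfl fun e _ => ?_
      by_cases hwe : w ∈ e <;> simp [hc, hwe]
    rw [h1, Finset.sum_congr rfl fun v _ => walk_deg (p v) w, Finset.sum_add_distrib,
      Finset.sum_ite_eq Finset.univ w (fun _ => (1 : ZMod 2)), Finset.sum_const]
    have hcard : ((Fintype.card V : ℕ) : ZMod 2) = 0 := by
      obtain ⟨k, hk⟩ := hV
      rw [hk]; push_cast; exact zmod_self_add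
    simp only [Finset.mem_univ, if_true, Finset.card_univ, nsmul_eq_mul, hcard, zero_mul, add_zero]
  refine ⟨{e : Sym2 V | c e = 1}, ?_, ?_⟩
  · intro e he
    simp only [Set.mem_setOf_eq] at he
    by_contra hnot
    have hz : ∀ v : V, (p v).edges.count e = 0 := by
      intro v
      rw [List.count_eq_zero]
      intro hmem
      exact hnot ((p v).edges_subset_edgeSet hmem)
    rw [hc] at he
    simp only [hz, Nat.cast_zero, Finset.sum_const_zero] at he
    exact one_ne_zero he.symm
  · intro w
    have h1 : ∑ e ∈ Finset.univ.filter (fun e => c e = 1 ∧ w ∈ e),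
        (if w ∈ e then c e else 0) = ∑ e ∈ {e : Sym2 V | c e = 1 ∧ w ∈ e}.toFinset,
        ((1 : ℕ) : ZMod 2) := by
      refine Finset.sum_congr ?_ ?_
      · ext e; simp [Set.mem_toFinset]
      · intro e he
        simp only [Set.mem_toFinset, Set.mem_setOf_eq] at he
        simp [he.1, he.2]
    have h2 : ∑ e ∈ Finset.univ.filter (fun e => ¬(c e = 1 ∧ w ∈ e)),
        (if w ∈ e then c e else 0) = 0 := by
      refine Finset.sum_eq_zero fun e he => ?_
      simp only [Finset.mem_filter, Finset.mem_univ, true_and, not_and] at he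
      by_cases hwe : w ∈ e
      · have hne1 : c e ≠ 1 := fun h => he h hwe
        have h0 : c e = 0 := by
          rcases (by decide : ∀ x : ZMod 2, x = 0 ∨ x = 1) (c e) with h | h
          · exact h
          · exact absurd h hne1
        simp [hwe, h0]
      · simp [hwe]
    have key : (({e : Sym2 V | c e = 1 ∧ w ∈ e}.ncard : ℕ) : ZMod 2) = 1 := by
      have hsplit := Finset.sum_filter_add_sum_filter_not Finset.univ
        (fun e => c e = 1 ∧ w ∈ e) (fun e => if w ∈ e then c e else 0)
      rw [h1, h2, add_zero] at hsplit
      rw [Set.ncard_eq_toFinset_card', Finset.card_eq_sum_ones, Nat.cast_sum, hsplit, hdeg w]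
    show Odd {e : Sym2 V | c e = 1 ∧ w ∈ e}.ncard
    rw [odd_iff_cast]
    exact key
end

section
/- Every tree admits a partition of its edge set into at most 2 classes such that each non-empty class induces a subgraph in which every vertex (of the induced subgraph) has odd degree. -/
/-- The degree of vertex `v` in the color class `i` of the edge-coloring `c` of `G`. -/
noncomputable def classDeg {V : Type*} (G : SimpleGraph V) {k : ℕ}
    (c : Sym2 V → Fin k) (i : Fin k) (v : V) : ℕ :=
  {e : Sym2 V | e ∈ G.edgeSet ∧ c e = i ∧ v ∈ e}.ncard

/-- `G` is odd `k`-edge-colorable: there is an edge-coloring with `k` colors such that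
every vertex incident to an edge of a color class has odd degree in that class. -/
def OddEdgeColorable {V : Type*} (G : SimpleGraph V) (k : ℕ) : Prop :=
  ∃ c : Sym2 V → Fin k, ∀ (i : Fin k) (v : V),
    classDeg G c i v ≠ 0 → Odd (classDeg G c i v)

/-!
Root the tree at a vertex `r` of degree at most one and label every vertex `v` by the parity of
the number of even-degree vertices on the path from `r` to `v`. Color each edge by the label of
its endpoint nearer to `r`. At a vertex `v ≠ r` with parent `u`, the edges to the children of `v`
all get the label of `v` and the edge to `u` gets the label of `u`; these agree exactly when
`deg v` is odd, so each color class meets `v` in `deg v`, `deg v - 1` (with `deg v` even) or one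
edge. At `r` every class has at most one edge.
-/

open Finset

theorem Finset.odd_card_filter_eq_of_forall_ne_eq {α β : Type*} [DecidableEq α] [DecidableEq β]
    {s : Finset α} {f : α → β} {u : α} {a : β} (hu : u ∈ s) (hf : ∀ x ∈ s, x ≠ u → f x = a)
    (hodd : f u = a ↔ Odd #s) {i : β} (hi : #{x ∈ s | f x = i} ≠ 0) :
    Odd #{x ∈ s | f x = i} := by
  by_cases hua : f u = a
  · have hall : ∀ x ∈ s, f x = a := fun x hx => by
      rcases eq_or_ne x u with rfl | hxu
      exacts [hua, hf x hx hxu]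
    by_cases hia : a = i
    · rwa [filter_true_of_mem fun x hx => (hall x hx).trans hia, ← hodd]
    · rw [filter_false_of_mem fun x hx => (hall x hx).symm ▸ hia, card_empty] at hi
      exact absurd rfl hi
  · have hs : Even #s := Nat.not_odd_iff_even.mp (hodd.not.mp hua)
    by_cases hia : a = i
    · subst hia
      have hfilter : {x ∈ s | f x = a} = s.erase u := by
        ext x
        simp only [mem_filter, mem_erase]
        exact ⟨fun h => ⟨fun hxu => hua (hxu ▸ h.2), h.1⟩, fun h => ⟨h.2, hf x h.2 h.1⟩⟩
      rw [hfilter, card_erase_of_mem hu]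
      exact Nat.Even.sub_odd (card_pos.mpr ⟨u, hu⟩) hs odd_one
    · by_cases hiu : f u = i
      · have hfilter : {x ∈ s | f x = i} = {u} := by
          ext x
          simp only [mem_filter, mem_singleton]
          exact ⟨fun h => by_contra fun hxu => hia (hf x h.1 hxu ▸ h.2), fun h => h ▸ ⟨hu, hiu⟩⟩
        rw [hfilter, card_singleton]
        exact odd_one
      · rw [filter_false_of_mem fun x hx hx' => ?_, card_empty] at hi
        · exact absurd rfl hi
        · rcases eq_or_ne x u with rfl | hxu
          exacts [hiu hx', hia (hf x hx hxu ▸ hx')]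

namespace SimpleGraph

variable {V : Type*} {G : SimpleGraph V}

theorem classDeg_eq_card_filter {k : ℕ} (c : Sym2 V → Fin k) (i : Fin k) (v : V)
    [Fintype (G.neighborSet v)] :
    classDeg G c i v = #{w ∈ G.neighborFinset v | c s(v, w) = i} := by
  have himage : {e : Sym2 V | e ∈ G.edgeSet ∧ c e = i ∧ v ∈ e}
      = (fun w => s(v, w)) '' ↑{w ∈ G.neighborFinset v | c s(v, w) = i} := by
    ext e
    constructor
    · rintro ⟨he, hc, hv⟩
      obtain ⟨w, rfl⟩ := Sym2.mem_iff_exists.mp hv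
      exact ⟨w, by simpa using And.intro he hc, rfl⟩
    · rintro ⟨w, hw, rfl⟩
      simp only [coe_filter, mem_neighborFinset, Set.mem_ofPred_eq] at hw
      exact ⟨hw.1, hw.2, Sym2.mem_mk_left v w⟩
  rw [classDeg, himage, Set.ncard_image_of_injective _ fun _ _ h => Sym2.congr_right.mp h,
    Set.ncard_coe_finset]

theorem classDeg_le_degree {k : ℕ} (c : Sym2 V → Fin k) (i : Fin k) (v : V)
    [Fintype (G.neighborSet v)] : classDeg G c i v ≤ G.degree v := by
  rw [classDeg_eq_card_filter]
  exact card_filter_le _ _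

theorem IsTree.exists_degree_le_one [Fintype V] [DecidableRel G.Adj] (hG : G.IsTree) :
    ∃ v, G.degree v ≤ 1 := by
  cases subsingleton_or_nontrivial V
  · exact ⟨hG.connected.nonempty.some,
      (degree_eq_zero_of_subsingleton (G := G) _).trans_le zero_le_one⟩
  · obtain ⟨v, hv⟩ := hG.exists_vert_degree_one_of_nontrivial
    exact ⟨v, hv.le⟩

namespace IsTree

variable (hG : G.IsTree) (r : V)

noncomputable def rootPath (v : V) : G.Walk r v :=
  (hG.existsUnique_path r v).choose

theorem isPath_rootPath (v : V) : (hG.rootPath r v).IsPath :=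
  (hG.existsUnique_path r v).choose_spec.1

theorem eq_rootPath {v : V} {p : G.Walk r v} (hp : p.IsPath) : p = hG.rootPath r v :=
  (hG.existsUnique_path r v).choose_spec.2 p hp

noncomputable def parent (v : V) : V :=
  (hG.rootPath r v).penultimate

theorem parent_root : hG.parent r r = r := by
  rw [parent, ← hG.eq_rootPath r Walk.IsPath.nil, Walk.penultimate_nil]

variable {r}

theorem adj_parent {v : V} (hv : v ≠ r) : G.Adj (hG.parent r v) v :=
  Walk.adj_penultimate (Walk.not_nil_of_ne hv.symm)

theorem rootPath_eq_concat_parent {v : V} (hv : v ≠ r) :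
    hG.rootPath r v = (hG.rootPath r (hG.parent r v)).concat (hG.adj_parent hv) := by
  have hdrop := hG.eq_rootPath r (hG.isPath_rootPath r v).dropLast
  exact (Walk.concat_dropLast _).symm.trans (congrArg (·.concat (hG.adj_parent hv)) hdrop)

theorem parent_eq_or_parent_eq {v w : V} (h : G.Adj v w) :
    hG.parent r w = v ∨ hG.parent r v = w := by
  by_cases hw : w ∈ (hG.rootPath r v).support
  · exact .inr (hG.isAcyclic.eq_penultimate_of_adj_end (hG.isPath_rootPath r v) h hw).symm
  · have hv := hG.isAcyclic.mem_support_of_ne_mem_support_of_adj_of_isPath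
      (hG.isPath_rootPath r w) (hG.isPath_rootPath r v) h.symm hw
    exact .inl (hG.isAcyclic.eq_penultimate_of_adj_end (hG.isPath_rootPath r w) h.symm hv).symm

theorem length_rootPath_parent_lt {v : V} (hv : v ≠ r) :
    (hG.rootPath r (hG.parent r v)).length < (hG.rootPath r v).length := by
  rw [hG.rootPath_eq_concat_parent hv, Walk.length_concat]
  exact Nat.lt_succ_self _

variable (r) [G.LocallyFinite]

noncomputable def evenDegreeParity (v : V) : Fin 2 :=
  if Even ((hG.rootPath r v).support.countP fun x => Even (G.degree x)) then 0 else 1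

theorem evenDegreeParity_parent_eq_iff {v : V} (hv : v ≠ r) :
    hG.evenDegreeParity r (hG.parent r v) = hG.evenDegreeParity r v ↔ Odd (G.degree v) := by
  have hcount : ((hG.rootPath r v).support.countP fun x => Even (G.degree x)) =
      ((hG.rootPath r (hG.parent r v)).support.countP fun x => Even (G.degree x)) +
        if Even (G.degree v) then 1 else 0 := by
    rw [hG.rootPath_eq_concat_parent hv, Walk.support_concat,
      List.countP_append, List.countP_singleton]
    simp only [decide_eq_true_eq]
  rw [evenDegreeParity, evenDegreeParity, hcount, ← Nat.not_even_iff_odd]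
  by_cases hd : Even (G.degree v)
  · simp only [hd, Nat.even_add_one, if_true, not_true_eq_false, iff_false]
    split_ifs <;> decide
  · simp only [hd, if_false, add_zero, not_false_eq_true]

/-- An edge gets the label of its endpoint nearer to `r`; the value `0` on pairs of equal depth
is never used on an edge. -/
noncomputable def oddColoring : Sym2 V → Fin 2 :=
  Sym2.lift ⟨fun a b =>
    if (hG.rootPath r a).length < (hG.rootPath r b).length then hG.evenDegreeParity r a
    else if (hG.rootPath r b).length < (hG.rootPath r a).length then hG.evenDegreeParity r b
    else 0, fun a b => by dsimp only; split_ifs <;> first | rfl | omega⟩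

variable {r}

theorem oddColoring_parent {v : V} (hv : v ≠ r) :
    hG.oddColoring r s(hG.parent r v, v) = hG.evenDegreeParity r (hG.parent r v) :=
  if_pos (hG.length_rootPath_parent_lt hv)

theorem odd_classDeg_oddColoring {v : V} (hv : v ≠ r) {i : Fin 2}
    (hi : classDeg G (hG.oddColoring r) i v ≠ 0) : Odd (classDeg G (hG.oddColoring r) i v) := by
  classical
  rw [classDeg_eq_card_filter] at hi ⊢
  refine odd_card_filter_eq_of_forall_ne_eq (u := hG.parent r v) (a := hG.evenDegreeParity r v)
    ((mem_neighborFinset _ _ _).mpr (hG.adj_parent hv).symm) (fun w hw hwu => ?_) ?_ hi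
  · have hpw : hG.parent r w = v :=
      (hG.parent_eq_or_parent_eq ((mem_neighborFinset _ _ _).mp hw)).resolve_right
        fun h => hwu h.symm
    have hwr : w ≠ r := fun h => hv (by rw [← hpw, h, parent_root])
    rw [← hpw, oddColoring_parent hG hwr]
  · rw [Sym2.eq_swap, oddColoring_parent hG hv, card_neighborFinset_eq_degree,
      evenDegreeParity_parent_eq_iff hG r hv]

end IsTree

end SimpleGraph

/-- Every tree is odd 2-edge-colorable. -/
theorem stmt1 {V : Type*} [Fintype V] (G : SimpleGraph V) (hG : G.IsTree) :
    OddEdgeColorable G 2 := by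
  classical
  obtain ⟨r, hr⟩ := hG.exists_degree_le_one
  refine ⟨hG.oddColoring r, fun i v hi => ?_⟩
  rcases eq_or_ne v r with rfl | hv
  · have hle := (SimpleGraph.classDeg_le_degree (hG.oddColoring v) i v).trans hr
    rw [Nat.odd_iff]
    omega
  · exact hG.odd_classDeg_oddColoring hv hi
end

section
/- Every connected graph of even order is odd 3-edge-colorable. -/
open Finset SimpleGraph Walk
open scoped symmDiff

section

variable {V : Type*}

lemma Set.odd_ncard_of_subset_singleton {α : Type*} {s : Set α} {a : α} (hs : s ⊆ {a})
    (h : s.ncard ≠ 0) : Odd s.ncard := by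
  have := (Set.ncard_le_ncard hs).trans (Set.ncard_singleton a).le
  rw [show s.ncard = 1 by omega]
  exact odd_one

lemma Set.odd_ncard_sep_of_forall_ne_eq {α κ : Type*} {E : Set α} (hE : E.Finite) {e₀ : α}
    (he₀ : e₀ ∈ E) {c : α → κ} {β : κ} (hc : ∀ e ∈ E, e ≠ e₀ → c e = β)
    (h₀ : c e₀ = β ↔ Odd E.ncard) (i : κ) (hi : {e ∈ E | c e = i}.ncard ≠ 0) :
    Odd {e ∈ E | c e = i}.ncard := by
  rcases eq_or_ne i β with rfl | hiβ
  · by_cases hβ : c e₀ = i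
    · have : {e ∈ E | c e = i} = E := Set.sep_eq_self_iff_mem_true.mpr fun e he =>
        (eq_or_ne e e₀).elim (· ▸ hβ) (hc e he)
      rwa [this, ← h₀]
    · have : {e ∈ E | c e = i} = E \ {e₀} := by
        ext e
        constructor
        · rintro ⟨he, hce⟩
          exact ⟨he, fun h => hβ (h ▸ hce)⟩
        · rintro ⟨he, hne⟩
          exact ⟨he, hc e he hne⟩
      have hpos := (Set.ncard_pos hE).mpr ⟨e₀, he₀⟩
      have heven := Nat.not_odd_iff_even.mp (mt h₀.mpr hβ)
      rw [this, Set.ncard_sdiff_singleton_of_mem he₀]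
      grind
  · exact Set.odd_ncard_of_subset_singleton
      (fun e ⟨he, hce⟩ => by_contra fun hne => hiβ (hce ▸ hc e he hne)) hi

lemma Finset.even_card_symmDiff_iff {α : Type*} [DecidableEq α] (s t : Finset α) :
    Even #(s ∆ t) ↔ (Even #s ↔ Even #t) := by
  have h₁ := card_union_add_card_inter s t
  have h₂ : #(s ∆ t) = #(s ∪ t) - #(s ∩ t) := by
    rw [symmDiff_eq_sup_sdiff_inf, sup_eq_union, inf_eq_inter,
      card_sdiff_of_subset inter_subset_union]
  have h₃ := card_le_card (inter_subset_union (s := s) (t := t))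
  simp only [Nat.even_iff]
  omega

lemma classDeg_eq_ncard (G : SimpleGraph V) {k : ℕ} (c : Sym2 V → Fin k) (i : Fin k) (v : V) :
    classDeg G c i v = {e ∈ G.incidenceSet v | c e = i}.ncard := by
  unfold classDeg incidenceSet
  congr 1
  ext e
  simp only [Set.mem_ofPred_eq]
  tauto

lemma classDeg_congr {G G' : SimpleGraph V} {k : ℕ} {c c' : Sym2 V → Fin k} {x : V}
    (h : ∀ e, x ∈ e → (e ∈ G.edgeSet ↔ e ∈ G'.edgeSet) ∧ c e = c' e) (i : Fin k) :
    classDeg G c i x = classDeg G' c' i x := by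
  unfold classDeg
  congr 1
  ext e
  by_cases hxe : x ∈ e
  · simp [hxe, (h e hxe).1, (h e hxe).2]
  · simp [hxe]

theorem OddEdgeColorable.sup {G H : SimpleGraph V} {a b : ℕ} (hGH : Disjoint G H)
    (hG : OddEdgeColorable G a) (hH : OddEdgeColorable H b) :
    OddEdgeColorable (G ⊔ H) (a + b) := by
  classical
  obtain ⟨cG, hcG⟩ := hG
  obtain ⟨cH, hcH⟩ := hH
  have hdisj := disjoint_edgeSet.mpr hGH
  set c : Sym2 V → Fin (a + b) :=
    fun e => if e ∈ G.edgeSet then Fin.castAdd b (cG e) else Fin.natAdd a (cH e)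
  refine ⟨c, fun i v => ?_⟩
  induction i using Fin.addCases with
  | left j =>
    have : classDeg (G ⊔ H) c (Fin.castAdd b j) v = classDeg G cG j v := by
      unfold classDeg
      congr 1
      ext e
      by_cases he : e ∈ G.edgeSet <;> simp [c, he, Fin.ext_iff] <;> grind
    rw [this]
    exact hcG j v
  | right j =>
    have : classDeg (G ⊔ H) c (Fin.natAdd a j) v = classDeg H cH j v := by
      unfold classDeg
      congr 1
      ext e
      by_cases he : e ∈ G.edgeSet
      · simp [c, he, Set.disjoint_left.mp hdisj he, Fin.ext_iff]
        omega
      · simp [c, he, Fin.ext_iff]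
    rw [this]
    exact hcH j v

theorem oddEdgeColorable_one_of_odd_degree [Fintype V] {J : SimpleGraph V} [DecidableRel J.Adj]
    (hJ : ∀ v, Odd (J.degree v)) : OddEdgeColorable J 1 := by
  classical
  refine ⟨fun _ => 0, fun i v _ => ?_⟩
  rw [classDeg_eq_ncard, Subsingleton.elim i 0]
  simp only [and_true, Set.ofPred_mem_eq]
  rw [← coe_incidenceFinset, Set.ncard_coe_finset, card_incidenceFinset_eq_degree]
  exact hJ v

namespace SimpleGraph

lemma even_degree_symmDiff_iff [Fintype V] (A B : SimpleGraph V) [DecidableRel A.Adj]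
    [DecidableRel B.Adj] [DecidableRel (A ∆ B).Adj] (x : V) :
    Even ((A ∆ B).degree x) ↔ (Even (A.degree x) ↔ Even (B.degree x)) := by
  classical
  have : (A ∆ B).neighborFinset x = A.neighborFinset x ∆ B.neighborFinset x := by
    ext y
    rw [mem_symmDiff, mem_neighborFinset, mem_neighborFinset, mem_neighborFinset]
    simp [symmDiff_def]
  simp only [← card_neighborFinset_eq_degree, this, even_card_symmDiff_iff]

lemma Walk.fromEdgeSet_edgeSet_le {G : SimpleGraph V} {u v : V} (p : G.Walk u v) :
    fromEdgeSet p.edgeSet ≤ G :=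
  (fromEdgeSet_le G).mpr fun _ he => p.edges_subset_edgeSet he.1

lemma Walk.IsTrail.even_degree_fromEdgeSet_iff [Fintype V] [DecidableEq V]
    {G : SimpleGraph V} {u v : V} {p : G.Walk u v} (hp : p.IsTrail)
    [DecidableRel (fromEdgeSet p.edgeSet).Adj] (x : V) :
    Even ((fromEdgeSet p.edgeSet).degree x) ↔ (u ≠ v → x ≠ u ∧ x ≠ v) := by
  have hsub : ∀ e ∈ p.edges, e ∈ (fromEdgeSet p.edgeSet).edgeSet := fun e he => by
    simp [he, G.not_isDiag_of_mem_edgeSet (p.edges_subset_edgeSet he)]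
  refine IsEulerian.even_degree_iff (p := p.transfer _ hsub) ?_
  rw [Walk.isEulerian_iff, isTrail_def, edges_transfer]
  exact ⟨hp.edges_nodup, fun e he => (edgeSet_fromEdgeSet _ ▸ he).1⟩

lemma exists_ne_even_degree [Fintype V] (hV : Even (Fintype.card V)) (J : SimpleGraph V)
    [DecidableRel J.Adj] {u : V} (hu : Even (J.degree u)) : ∃ v ≠ u, Even (J.degree v) := by
  have hcard : #{v | Odd (J.degree v)} + #{v | Even (J.degree v)} = Fintype.card V := by
    simp only [← Nat.not_odd_iff_even]
    rw [card_filter_add_card_filter_not, card_univ]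
  have hpos : 0 < #{v | Even (J.degree v)} := card_pos.mpr ⟨u, by simpa using hu⟩
  have heven : Even #{v | Even (J.degree v)} :=
    (Nat.even_add.mp (hcard ▸ hV)).mp J.even_card_odd_degree_vertices
  obtain ⟨v, hv, hvu⟩ := exists_mem_ne (s := {v | Even (J.degree v)})
    (by rcases heven with ⟨k, hk⟩; omega) u
  exact ⟨v, hvu, by simpa using hv⟩

open scoped Classical in
theorem Connected.exists_le_forall_odd_degree [Fintype V] {G : SimpleGraph V}
    (hG : G.Connected) (hV : Even (Fintype.card V)) : ∃ J ≤ G, ∀ v, Odd (J.degree v) := by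
  obtain ⟨J, hJG, hmax⟩ := Set.Finite.exists_maximalFor
    (fun J : SimpleGraph V => #{v | Odd (J.degree v)}) {J | J ≤ G} (Set.toFinite _)
    ⟨⊥, bot_le (a := G)⟩
  refine ⟨J, hJG, fun u => ?_⟩
  by_contra hu
  obtain ⟨v, hvu, hv⟩ := exists_ne_even_degree hV J (Nat.not_odd_iff_even.mp hu)
  obtain ⟨p, hp⟩ := (hG.preconnected u v).exists_isPath
  have hodd : ∀ x, Odd ((J ∆ fromEdgeSet p.edgeSet).degree x) ↔
      (Odd (J.degree x) ∨ x = u ∨ x = v) := by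
    intro x
    have := even_degree_symmDiff_iff J (fromEdgeSet p.edgeSet) x
    rw [hp.isTrail.even_degree_fromEdgeSet_iff] at this
    simp only [← Nat.not_even_iff_odd, this]
    grind
  have hlt : #{v | Odd (J.degree v)} < #{v | Odd ((J ∆ fromEdgeSet p.edgeSet).degree v)} := by
    refine card_lt_card ⟨fun x hx => ?_, fun hsub => hu ?_⟩
    · simp only [mem_filter_univ] at hx ⊢
      exact (hodd x).mpr (Or.inl hx)
    · simpa using hsub (by simpa using (hodd u).mpr (by simp))
  exact hlt.not_ge (hmax (symmDiff_le_sup.trans (sup_le hJG p.fromEdgeSet_edgeSet_le)) hlt.le)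

open scoped Classical in
theorem Connected.exists_le_forall_odd_degree_isAcyclic_sdiff [Fintype V]
    {G : SimpleGraph V} (hG : G.Connected) (hV : Even (Fintype.card V)) :
    ∃ J ≤ G, (∀ v, Odd (J.degree v)) ∧ (G \ J).IsAcyclic := by
  obtain ⟨J, ⟨hJG, hJodd⟩, hmax⟩ := Set.Finite.exists_maximal
    (s := {J : SimpleGraph V | J ≤ G ∧ ∀ v, Odd (J.degree v)}) (Set.toFinite _)
    (hG.exists_le_forall_odd_degree hV)
  refine ⟨J, hJG, hJodd, fun v c hc => ?_⟩
  have hCle := c.fromEdgeSet_edgeSet_le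
  have hdisj : Disjoint J (fromEdgeSet c.edgeSet) := disjoint_sdiff_self_right.mono_right hCle
  have hodd : ∀ x, Odd ((J ∆ fromEdgeSet c.edgeSet).degree x) := by
    intro x
    have := even_degree_symmDiff_iff J (fromEdgeSet c.edgeSet) x
    rw [hc.isTrail.even_degree_fromEdgeSet_iff] at this
    rw [← Nat.not_even_iff_odd, this]
    simpa [Nat.not_even_iff_odd] using hJodd x
  have hle : J ≤ J ∆ fromEdgeSet c.edgeSet := hdisj.symmDiff_eq_sup ▸ le_sup_left
  have hCbot := hdisj.eq_bot_of_ge <| (hdisj.symmDiff_eq_sup ▸ le_sup_right).trans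
    (hmax ⟨symmDiff_le_sup.trans (sup_le hJG (hCle.trans sdiff_le)), hodd⟩ hle)
  obtain ⟨e, he⟩ := List.exists_mem_of_length_pos (l := c.edges)
    (by rw [length_edges]; have := hc.three_le_length; omega)
  have : e ∈ (fromEdgeSet c.edgeSet).edgeSet := by
    simp [he, (G \ J).not_isDiag_of_mem_edgeSet (c.edges_subset_edgeSet he)]
  simp [hCbot] at this

variable {H : SimpleGraph V}

lemma IsAcyclic.eq_snd_of_adj_of_forall_length_le (hH : H.IsAcyclic) {a b y : V}
    {p : H.Walk a b} (hp : p.IsPath)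
    (hmax : ∀ a' b' (q : H.Walk a' b'), q.IsPath → q.length ≤ p.length) (hy : H.Adj a y) :
    y = p.snd := by
  by_cases hys : y ∈ p.support
  · exact hH.eq_snd_of_adj_start hp hy hys
  · exact absurd (hmax _ _ (cons hy.symm p) (hp.cons hys)) (by simp)

theorem IsAcyclic.exists_pendant_star [Finite V] (hH : H.IsAcyclic) {u v : V}
    (huv : H.Adj u v) :
    ∃ w a t, a ≠ t ∧ H.Adj w a ∧ ∀ x, H.Adj w x → x ≠ t → ∀ y, H.Adj x y → y = w := by
  have : Nonempty V := ⟨u⟩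
  obtain ⟨a, b, p, hp, hmax⟩ := Walk.exists_isPath_forall_isPath_length_le_length H
  cases p with
  | nil => simpa using hmax _ _ _ (Path.singleton huv).isPath
  | @cons _ w _ haw q =>
    rw [cons_isPath_iff] at hp
    refine ⟨w, a, q.snd, fun h => hp.2 (h ▸ q.getVert_mem_support 1), haw.symm,
      fun x hwx hxt y hxy => ?_⟩
    have hxq : x ∉ q.support := fun hx => hxt (hH.eq_snd_of_adj_start hp.1 hwx hx)
    simpa using hH.eq_snd_of_adj_of_forall_length_le (p := cons hwx.symm q) (hp.1.cons hxq)
      (by simpa using hmax) hxy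

theorem oddEdgeColorable_two_of_deleteEdges_pendant_star [Finite V] {w a t : V} (hat : a ≠ t)
    (hwa : H.Adj w a) (hpendant : ∀ x, H.Adj w x → x ≠ t → ∀ y, H.Adj x y → y = w)
    (h : OddEdgeColorable (H.deleteEdges (H.incidenceSet w \ {s(w, t)})) 2) :
    OddEdgeColorable H 2 := by
  classical
  obtain ⟨c', hc'⟩ := h
  set D := H.incidenceSet w \ {s(w, t)}
  have hwaD : s(w, a) ∈ D := ⟨H.mk'_mem_incidenceSet_left_iff.mpr hwa,
    fun h => hat (Sym2.congr_right.mp h)⟩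
  -- `β` is the color of the one edge at `w` that survives in `c'`, or arbitrary if there is none.
  set β := c' s(w, t)
  set c : Sym2 V → Fin 2 := fun e =>
    if e ∈ D then (if e = s(w, a) ∧ Even (H.incidenceSet w).ncard then β + 1 else β) else c' e
  refine ⟨c, fun i x => ?_⟩
  rcases eq_or_ne x w with rfl | hxw
  · rw [classDeg_eq_ncard]
    refine Set.odd_ncard_sep_of_forall_ne_eq (β := β) (Set.toFinite _) hwaD.1
      (fun e he hne => ?_) ?_ i
    · by_cases heD : e ∈ D
      · simp [c, heD, hne]
      · obtain rfl : e = s(x, t) := by simpa [D, he] using heD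
        simp only [c, if_neg heD, β]
    · have : ∀ b : Fin 2, b + 1 ≠ b := by decide
      by_cases hodd : Odd (H.incidenceSet x).ncard <;> simp [c, hwaD, hodd, this]
  by_cases hx : H.Adj w x ∧ x ≠ t
  · refine Set.odd_ncard_of_subset_singleton (a := s(w, x)) ?_
    rintro e ⟨he, -, hxe⟩
    obtain ⟨y, rfl⟩ := Sym2.mem_iff_exists.mp hxe
    rw [hpendant x hx.1 hx.2 y he]
    exact Sym2.eq_swap
  · have hnD : ∀ e, x ∈ e → e ∉ D := by
      rintro e hxe ⟨⟨he, hwe⟩, het⟩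
      obtain rfl := (Sym2.mem_and_mem_iff hxw).mp ⟨hxe, hwe⟩
      refine hx ⟨(H.mem_edgeSet.mp he).symm, ?_⟩
      rintro rfl
      exact het Sym2.eq_swap
    rw [classDeg_congr (G' := H.deleteEdges D) (c' := c') fun e hxe =>
      ⟨by rw [edgeSet_deleteEdges, Set.mem_sdiff, and_iff_left (hnD e hxe)], if_neg (hnD e hxe)⟩]
    exact hc' i x

theorem IsAcyclic.oddEdgeColorable_two [Finite V] (hH : H.IsAcyclic) : OddEdgeColorable H 2 := by
  induction hn : H.edgeSet.ncard using Nat.strong_induction_on generalizing H with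
  | _ n ih =>
  by_cases hbot : H = ⊥
  · subst hbot
    exact ⟨fun _ => 0, fun i v h => by simp [classDeg] at h⟩
  obtain ⟨u, v, huv⟩ := ne_bot_iff_exists_adj.mp hbot
  obtain ⟨w, a, t, hat, hwa, hpendant⟩ := hH.exists_pendant_star huv
  have hwaD : s(w, a) ∈ H.incidenceSet w \ {s(w, t)} :=
    ⟨H.mk'_mem_incidenceSet_left_iff.mpr hwa, fun h => hat (Sym2.congr_right.mp h)⟩
  refine oddEdgeColorable_two_of_deleteEdges_pendant_star hat hwa hpendant
    (ih _ ?_ (hH.anti (deleteEdges_le _)) rfl)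
  rw [← hn, edgeSet_deleteEdges]
  exact Set.ncard_lt_ncard (Set.sdiff_ssubset_left_iff.mpr ⟨_, hwaD.1.1, hwaD⟩) (Set.toFinite _)

end SimpleGraph

end

/-- Every connected graph of even order is odd 3-edge-colorable. -/
theorem stmt2 {V : Type*} [Fintype V] (G : SimpleGraph V)
    (hG : G.Connected) (hV : Even (Fintype.card V)) :
    OddEdgeColorable G 3 := by
  classical
  obtain ⟨J, hJG, hJodd, hacyc⟩ := hG.exists_le_forall_odd_degree_isAcyclic_sdiff hV
  have := (oddEdgeColorable_one_of_odd_degree hJodd).sup disjoint_sdiff_self_right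
    hacyc.oddEdgeColorable_two
  rwa [sup_sdiff_cancel_right hJG] at this
end

section
/- If G is a connected multigraph of odd order that contains a bridge, then G is odd 3-edge-colorable. -/
/-- A multigraph is given by an edge-index type `E` and an incidence map `f : E → Sym2 V`
(loopless when no `f e` is a diagonal).  `MOddEdgeColorable f k` means: there is an
edge-coloring with `k` colors such that every vertex incident to an edge of a color class
has odd degree in that class. -/
def MOddEdgeColorable {V E : Type*} (f : E → Sym2 V) (k : ℕ) : Prop :=
  ∃ c : E → Fin k, ∀ (i : Fin k) (v : V),
    {e : E | v ∈ f e ∧ c e = i}.ncard ≠ 0 → Odd {e : E | v ∈ f e ∧ c e = i}.ncard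

/-!
Fix a root `r` and go through the edges at `r`: a non-bridge gets colour `0` and is deleted, a
bridge `rz` cuts off a side rooted at `z`, which is coloured recursively. Every vertex other than
`r` then has colour classes `1, 2` odd or empty, and colour `0` of a parity prescribed in advance.
That parity at `z` decides whether `rz` gets colour `0`, so the number of colour-`0` edges at `r`
is forced, but the edges of colours `1, 2` at `r` may be split between these two colours at will;
a suitable split leaves at most one even class at `r`. Given a bridge `xy`, colour both sides so
that this class is colour `0` at `x` and at `y`, and colour the bridge `0`.
-/

open Finset

namespace OddColoring

open scoped Classical

variable {V E κ : Type*} (f : E → Sym2 V)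

noncomputable def edgeGraph (H : Finset E) : SimpleGraph V := SimpleGraph.fromEdgeSet (f '' H)

noncomputable def side (H : Finset E) (s : V) : Finset E :=
  {e ∈ H | ∀ u ∈ f e, (edgeGraph f H).Reachable s u}

noncomputable def colorDegree (H : Finset E) (c : E → κ) (w : V) : κ → ℕ :=
  fun i => #{e ∈ H | w ∈ f e ∧ c e = i}

def OddProfile (d : κ → ℕ) : Prop := ∀ i, d i ≠ 0 → Odd (d i)

section Counting

variable {f} {H : Finset E} {w : V}

lemma colorDegree_insert [DecidableEq κ] {e : E} (he : e ∉ H) (c : E → κ) (w : V) :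
    colorDegree f (insert e H) c w
      = colorDegree f H c w + if w ∈ f e then Pi.single (c e) 1 else 0 := by
  ext i
  simp only [colorDegree, filter_insert, Pi.add_apply]
  by_cases hw : w ∈ f e
  · by_cases hi : c e = i
    · subst hi
      simp [hw, he]
    · simp [hw, hi, Ne.symm hi]
  · simp [hw]

lemma colorDegree_congr {c c' : E → κ} (h : ∀ e ∈ H, c e = c' e) :
    colorDegree f H c w = colorDegree f H c' w := by
  ext i
  exact congrArg card (filter_congr fun e he => by rw [h e he])

lemma colorDegree_of_subset {H₁ : Finset E} (hsub : H₁ ⊆ H) (h : ∀ e ∈ H, w ∈ f e → e ∈ H₁)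
    (c : E → κ) : colorDegree f H c w = colorDegree f H₁ c w := by
  ext i
  simp only [colorDegree]
  congr 1
  ext e
  simp only [mem_filter]
  exact ⟨fun ⟨he, hw, hc⟩ => ⟨h e he hw, hw, hc⟩, fun ⟨he, hw, hc⟩ => ⟨hsub he, hw, hc⟩⟩

lemma colorDegree_eq_zero (h : ∀ e ∈ H, w ∉ f e) (c : E → κ) : colorDegree f H c w = 0 := by
  ext i
  simp only [colorDegree, Pi.zero_apply, card_eq_zero, filter_eq_empty_iff]
  exact fun e he hw => h e he hw.1

lemma colorDegree_perm (σ : Equiv.Perm κ) (c : E → κ) :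
    colorDegree f H (σ ∘ c) w = colorDegree f H c w ∘ σ.symm := by
  ext i
  simp [colorDegree, Equiv.eq_symm_apply]

lemma OddProfile.comp {κ' : Type*} {d : κ → ℕ} (h : OddProfile d) (g : κ' → κ) :
    OddProfile (d ∘ g) :=
  fun i => h (g i)

lemma ncard_eq_colorDegree [Fintype E] (c : E → κ) (v : V) (i : κ) :
    {e | v ∈ f e ∧ c e = i}.ncard = colorDegree f univ c v i := by
  rw [colorDegree, ← Set.ncard_coe_finset]
  congr
  ext
  simp

end Counting

section Reachability

variable {f} {H : Finset E}

lemma edgeGraph_adj {a b : V} :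
    (edgeGraph f H).Adj a b ↔ (∃ e ∈ H, f e = s(a, b)) ∧ a ≠ b := by
  simp [edgeGraph, SimpleGraph.fromEdgeSet_adj]

lemma reachable_of_mem {e : E} (he : e ∈ H) {u w : V} (hu : u ∈ f e) (hw : w ∈ f e) :
    (edgeGraph f H).Reachable u w := by
  by_cases huw : u = w
  · exact huw ▸ SimpleGraph.Reachable.refl u
  · exact (edgeGraph_adj.2 ⟨⟨e, he, (Sym2.mem_and_mem_iff huw).1 ⟨hu, hw⟩⟩, huw⟩).reachable

lemma exists_mem_of_reachable {u v : V} (h : (edgeGraph f H).Reachable u v) (hne : u ≠ v) :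
    ∃ e ∈ H, u ∈ f e := by
  obtain ⟨p⟩ := h
  cases p with
  | nil => exact absurd rfl hne
  | cons hadj _ =>
    obtain ⟨⟨e, he, hfe⟩, -⟩ := edgeGraph_adj.1 hadj
    exact ⟨e, he, hfe ▸ Sym2.mem_mk_left _ _⟩

lemma reachable_erase_or {e : E} {r z u : V} (hf : f e = s(r, z))
    (h : (edgeGraph f H).Reachable r u) :
    (edgeGraph f (H.erase e)).Reachable r u ∨ (edgeGraph f (H.erase e)).Reachable z u := by
  rw [SimpleGraph.reachable_iff_reflTransGen] at h
  induction h with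
  | refl => exact Or.inl .rfl
  | @tail b c _ hbc ih =>
    obtain ⟨⟨e', he', hfe'⟩, hne⟩ := edgeGraph_adj.1 hbc
    by_cases hee : e' = e
    · have hc : c ∈ s(r, z) := hf ▸ hee ▸ hfe' ▸ Sym2.mem_mk_right b c
      rcases Sym2.mem_iff.1 hc with rfl | rfl
      · exact Or.inl .rfl
      · exact Or.inr .rfl
    · have hadj := (edgeGraph_adj.2 ⟨⟨e', mem_erase.2 ⟨hee, he'⟩, hfe'⟩, hne⟩).reachable
      exact ih.imp (·.trans hadj) (·.trans hadj)

lemma reachable_erase_of_reachable {e : E} {r z u : V} (hf : f e = s(r, z))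
    (hrz : (edgeGraph f (H.erase e)).Reachable r z) (h : (edgeGraph f H).Reachable r u) :
    (edgeGraph f (H.erase e)).Reachable r u :=
  (reachable_erase_or hf h).elim id hrz.trans

lemma side_subset {s : V} : side f H s ⊆ H := filter_subset _ _

lemma reachable_side {s u : V} (h : (edgeGraph f H).Reachable s u) :
    (edgeGraph f (side f H s)).Reachable s u := by
  rw [SimpleGraph.reachable_iff_reflTransGen] at h ⊢
  induction h with
  | refl => exact .refl
  | @tail b c hb hbc ih =>
    obtain ⟨⟨e, he, hfe⟩, hne⟩ := edgeGraph_adj.1 hbc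
    have hb' := (SimpleGraph.reachable_iff_reflTransGen _ _).2 hb
    have hs : e ∈ side f H s :=
      mem_filter.2 ⟨he, fun u hu => hb'.trans (reachable_of_mem he (hfe ▸ Sym2.mem_mk_left b c) hu)⟩
    exact ih.tail (edgeGraph_adj.2 ⟨⟨e, hs, hfe⟩, hne⟩)

lemma reachable_side_of_mem {s : V} {e : E} (he : e ∈ side f H s) {u : V} (hu : u ∈ f e) :
    (edgeGraph f (side f H s)).Reachable s u :=
  reachable_side ((mem_filter.1 he).2 u hu)

lemma disjoint_side {r z : V} (h : ¬ (edgeGraph f H).Reachable r z) :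
    Disjoint (side f H r) (side f H z) := by
  refine disjoint_left.2 fun e hr hz => h ?_
  have hu := (f e).out_fst_mem
  exact ((mem_filter.1 hr).2 _ hu).trans ((mem_filter.1 hz).2 _ hu).symm

lemma colorDegree_eq_side_add [DecidableEq κ] {e : E} (he : e ∈ H) {r z w : V}
    (hf : f e = s(r, z)) (hbr : ¬ (edgeGraph f (H.erase e)).Reachable r z)
    (hw : (edgeGraph f (H.erase e)).Reachable r w) {c c' : E → κ}
    (hc : ∀ e' ∈ side f (H.erase e) r, c e' = c' e') :
    colorDegree f H c w
      = colorDegree f (side f (H.erase e) r) c' w + if w = r then Pi.single (c e) 1 else 0 := by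
  have hwe : w ∈ f e ↔ w = r := by
    rw [hf, Sym2.mem_iff]
    exact or_iff_left fun hwz => hbr (hwz ▸ hw)
  have h := colorDegree_insert (f := f) (notMem_erase e H) c w
  rw [insert_erase he] at h
  rw [h, colorDegree_of_subset side_subset ?_, colorDegree_congr hc]
  · simp only [hwe]
  · exact fun e' he' hwe' => mem_filter.2 ⟨he', fun u hu => hw.trans (reachable_of_mem he' hwe' hu)⟩

lemma oddProfile_of_side [DecidableEq κ] {e : E} (he : e ∈ H) {r z w : V} (hf : f e = s(r, z))
    (hbr : ¬ (edgeGraph f (H.erase e)).Reachable r z)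
    (hw : (edgeGraph f (H.erase e)).Reachable r w) {c c' : E → κ}
    (hc : ∀ e' ∈ side f (H.erase e) r, c e' = c' e')
    (hodd : ∀ w ≠ r, OddProfile (colorDegree f (side f (H.erase e) r) c' w))
    (hodd_r : OddProfile (colorDegree f (side f (H.erase e) r) c' r + Pi.single (c e) 1)) :
    OddProfile (colorDegree f H c w) := by
  rw [colorDegree_eq_side_add he hf hbr hw hc]
  by_cases hwr : w = r
  · rwa [if_pos hwr, hwr]
  · simpa [hwr] using hodd w hwr

end Reachability

/-- `t` counts the edges of colour `0` at the vertex that have already been deleted. -/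
def Admissible (t : ℕ) (d : Fin 3 → ℕ) : Prop :=
  Odd (d 0 + t) ∧ (d 1 ≠ 0 → Odd (d 1)) ∧ (d 2 ≠ 0 → Odd (d 2))

lemma Admissible.oddProfile {d : Fin 3 → ℕ} (h : Admissible 0 d) : OddProfile d := by
  intro i
  fin_cases i
  exacts [fun _ => h.1, h.2.1, h.2.2]

lemma admissible_add_single_zero {t : ℕ} {d : Fin 3 → ℕ} :
    Admissible t (d + Pi.single 0 1) ↔ Admissible (t + 1) d := by
  simp [Admissible, add_right_comm, add_assoc]

lemma exists_admissible_add_single (t m₀ m : ℕ) {γ : Fin 3} (hγ : γ ≠ 0) :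
    ∃ k₁ k₂, k₁ + k₂ = m ∧
      Admissible t (![m₀, k₁, k₂] + Pi.single (if Even (m₀ + t) then 0 else γ) 1) := by
  rcases Nat.even_or_odd m with hm | hm <;> split_ifs with h
  · rcases eq_or_ne m 0 with hm0 | hm0
    · exact ⟨0, 0, by omega, by simp_all [Admissible, Nat.odd_iff, Nat.even_iff]; omega⟩
    · exact ⟨1, m - 1, by omega, by simp_all [Admissible, Nat.odd_iff, Nat.even_iff]; omega⟩
  · fin_cases γ
    · exact absurd rfl hγ
    · exact ⟨m, 0, by omega, by simp_all [Admissible, Nat.odd_iff, Nat.even_iff]⟩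
    · exact ⟨0, m, by omega, by simp_all [Admissible, Nat.odd_iff, Nat.even_iff]⟩
  · exact ⟨m, 0, by omega, by simp_all [Admissible, Nat.odd_iff, Nat.even_iff]; omega⟩
  · fin_cases γ
    · exact absurd rfl hγ
    · exact ⟨0, m, by omega, by simp_all [Admissible, Nat.odd_iff, Nat.even_iff]⟩
    · exact ⟨m, 0, by omega, by simp_all [Admissible, Nat.odd_iff, Nat.even_iff]⟩

lemma exists_vec_add_single_eq (m₀ m : ℕ) (p : Prop) [Decidable p] {k₁ k₂ : ℕ}
    (hk : k₁ + k₂ = m + if p then 0 else 1) :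
    ∃ γ : Fin 3, γ ≠ 0 ∧ ∃ l₁ l₂, l₁ + l₂ = m ∧
      ![m₀, l₁, l₂] + Pi.single (if p then 0 else γ) 1 = ![m₀ + if p then 1 else 0, k₁, k₂] := by
  by_cases hp : p
  · refine ⟨1, by decide, k₁, k₂, by simpa [hp] using hk, ?_⟩
    ext i
    fin_cases i <;> simp [hp]
  · rcases Nat.eq_zero_or_pos k₁ with rfl | hpos
    · refine ⟨2, by decide, 0, k₂ - 1, by simp [hp] at hk; omega, ?_⟩
      ext i
      fin_cases i <;> simp [hp] at hk ⊢
      omega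
    · refine ⟨1, by decide, k₁ - 1, k₂, by simp [hp] at hk; omega, ?_⟩
      ext i
      fin_cases i <;> simp [hp]
      omega

/-- The invariant of the induction: the count of colour `0` at the root is fixed, but the edges of
colours `1, 2` there may be split between these two colours in any way. -/
def HasFlexibleColoring (H : Finset E) (r : V) (a : V → ℕ) : Prop :=
  ∃ m₀ m : ℕ, ∀ k₁ k₂, k₁ + k₂ = m → ∃ c : E → Fin 3,
    (∀ w ≠ r, (∃ e ∈ H, w ∈ f e) → Admissible (a w) (colorDegree f H c w)) ∧
    colorDegree f H c r = ![m₀, k₁, k₂]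

section Flexible

variable {f} {H : Finset E} {r : V} {a : V → ℕ}

lemma hasFlexibleColoring_empty : HasFlexibleColoring f ∅ r a := by
  refine ⟨0, 0, fun k₁ k₂ hk => ⟨fun _ => 0, by simp, ?_⟩⟩
  rw [colorDegree_eq_zero (by simp)]
  ext i
  fin_cases i <;> simp <;> omega

lemma HasFlexibleColoring.of_erase {e : E} (he : e ∈ H) {z : V} (hf : f e = s(r, z))
    (hz : z ≠ r → ∃ e' ∈ H.erase e, z ∈ f e')
    (h : HasFlexibleColoring f (H.erase e) r (a + Pi.single z 1)) :
    HasFlexibleColoring f H r a := by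
  obtain ⟨m₀, m, h⟩ := h
  refine ⟨m₀ + 1, m, fun k₁ k₂ hk => ?_⟩
  obtain ⟨c, hgood, hroot⟩ := h k₁ k₂ hk
  have hdeg : ∀ w, colorDegree f H (Function.update c e 0) w
      = colorDegree f (H.erase e) c w + if w ∈ f e then Pi.single 0 1 else 0 := by
    intro w
    have h := colorDegree_insert (f := f) (notMem_erase e H) (Function.update c e 0) w
    rw [insert_erase he, Function.update_self,
      colorDegree_congr fun e' he' => Function.update_of_ne (ne_of_mem_erase he') ..] at h
    exact h
  refine ⟨Function.update c e 0, fun w hwr hw => ?_, ?_⟩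
  · by_cases hwe : w ∈ f e
    · obtain rfl : w = z := by simpa [hf, hwr] using hwe
      rw [hdeg, if_pos hwe, admissible_add_single_zero]
      simpa using hgood w hwr (hz hwr)
    · obtain ⟨e', he', hwe'⟩ := hw
      have hne : e' ≠ e := by rintro rfl; exact hwe hwe'
      rw [hdeg, if_neg hwe, add_zero]
      have hwz : w ≠ z := by rintro rfl; exact hwe (hf ▸ Sym2.mem_mk_right r w)
      simpa [hwz] using hgood w hwr ⟨e', mem_erase.2 ⟨hne, he'⟩, hwe'⟩
  · rw [hdeg, if_pos (hf ▸ Sym2.mem_mk_left r z), hroot]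
    ext i
    fin_cases i <;> simp

lemma HasFlexibleColoring.of_bridge {e : E} (he : e ∈ H) {z : V} (hf : f e = s(r, z))
    (hconn : ∀ e ∈ H, ∀ u ∈ f e, (edgeGraph f H).Reachable r u)
    (hbr : ¬ (edgeGraph f (H.erase e)).Reachable r z)
    (hr : HasFlexibleColoring f (side f (H.erase e) r) r a)
    (hz : HasFlexibleColoring f (side f (H.erase e) z) z a) :
    HasFlexibleColoring f H r a := by
  obtain ⟨m₀r, mr, hr⟩ := hr
  obtain ⟨m₀z, mz, hz⟩ := hz
  refine ⟨m₀r + if Even (m₀z + a z) then 1 else 0, mr + if Even (m₀z + a z) then 0 else 1,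
    fun k₁ k₂ hk => ?_⟩
  obtain ⟨γ₁, hγ₁, l₁, l₂, hl, hsum⟩ := exists_vec_add_single_eq m₀r mr _ hk
  obtain ⟨j₁, j₂, hj, hadm⟩ := exists_admissible_add_single (a z) m₀z mz hγ₁
  set γ := if Even (m₀z + a z) then 0 else γ₁
  obtain ⟨cr, hgr, hrr⟩ := hr l₁ l₂ hl
  obtain ⟨cz, hgz, hzz⟩ := hz j₁ j₂ hj
  set H' := H.erase e
  let c : E → Fin 3 := fun e' => if e' = e then γ else if e' ∈ side f H' z then cz e' else cr e'
  have hce : c e = γ := if_pos rfl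
  have hdeg_r : ∀ w, (edgeGraph f H').Reachable r w → colorDegree f H c w
      = colorDegree f (side f H' r) cr w + if w = r then Pi.single γ 1 else 0 := by
    intro w hw
    rw [← hce]
    refine colorDegree_eq_side_add he hf hbr hw fun e' he' => ?_
    have hnz : e' ∉ side f H' z := disjoint_left.1 (disjoint_side hbr) he'
    simp [c, ne_of_mem_erase (side_subset he'), hnz]
  have hdeg_z : ∀ w, (edgeGraph f H').Reachable z w → colorDegree f H c w
      = colorDegree f (side f H' z) cz w + if w = z then Pi.single γ 1 else 0 := by
    intro w hw
    rw [← hce]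
    refine colorDegree_eq_side_add he (hf.trans Sym2.eq_swap) (fun h => hbr h.symm) hw
      fun e' he' => ?_
    simp [c, H', ne_of_mem_erase (side_subset he'), he']
  refine ⟨c, fun w hwr hw => ?_, ?_⟩
  · obtain ⟨e', he', hwe'⟩ := hw
    rcases reachable_erase_or hf (hconn e' he' w hwe') with hw | hw
    · rw [hdeg_r w hw, if_neg hwr, add_zero]
      exact hgr w hwr (exists_mem_of_reachable (reachable_side hw).symm hwr)
    · by_cases hwz : w = z
      · subst hwz
        rwa [hdeg_z w .rfl, if_pos rfl, hzz]
      · rw [hdeg_z w hw, if_neg hwz, add_zero]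
        exact hgz w hwz (exists_mem_of_reachable (reachable_side hw).symm hwz)
  · rwa [hdeg_r r .rfl, if_pos rfl, hrr]

end Flexible

theorem hasFlexibleColoring (H : Finset E) (r : V) (a : V → ℕ)
    (hconn : ∀ e ∈ H, ∀ u ∈ f e, (edgeGraph f H).Reachable r u) :
    HasFlexibleColoring f H r a := by
  induction H using Finset.strongInduction generalizing r a with
  | H H ih =>
  rcases H.eq_empty_or_nonempty with rfl | ⟨e₁, he₁⟩
  · exact hasFlexibleColoring_empty
  obtain ⟨e, he, hre⟩ : ∃ e ∈ H, r ∈ f e := by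
    by_cases hr : r = (f e₁).out.1
    · exact ⟨e₁, he₁, hr ▸ (f e₁).out_fst_mem⟩
    · exact exists_mem_of_reachable (hconn e₁ he₁ _ (f e₁).out_fst_mem) hr
  obtain ⟨z, hf⟩ := Sym2.mem_iff_exists.1 hre
  have hsub : H.erase e ⊂ H := erase_ssubset he
  by_cases hrz : (edgeGraph f (H.erase e)).Reachable r z
  · refine HasFlexibleColoring.of_erase he hf (exists_mem_of_reachable hrz.symm)
      (ih _ hsub r _ fun e' he' u hu => ?_)
    exact reachable_erase_of_reachable hf hrz (hconn e' (mem_of_mem_erase he') u hu)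
  · have hside : ∀ s, side f (H.erase e) s ⊂ H := fun s => side_subset.trans_ssubset hsub
    exact HasFlexibleColoring.of_bridge he hf hconn hrz
      (ih _ (hside r) r a fun _ he' _ hu => reachable_side_of_mem he' hu)
      (ih _ (hside z) z a fun _ he' _ hu => reachable_side_of_mem he' hu)

theorem exists_coloring_oddProfile_add_single (H : Finset E) (r : V)
    (hconn : ∀ e ∈ H, ∀ u ∈ f e, (edgeGraph f H).Reachable r u) (δ : Fin 3) :
    ∃ c : E → Fin 3, (∀ w ≠ r, OddProfile (colorDegree f H c w)) ∧
      OddProfile (colorDegree f H c r + Pi.single δ 1) := by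
  obtain ⟨m₀, m, h⟩ := hasFlexibleColoring f H r 0 hconn
  obtain ⟨k₁, k₂, hk, hadm⟩ := exists_admissible_add_single 0 m₀ m one_ne_zero
  obtain ⟨c, hgood, hroot⟩ := h k₁ k₂ hk
  set δ₀ : Fin 3 := if Even (m₀ + 0) then 0 else 1
  set σ := Equiv.swap δ₀ δ
  refine ⟨σ ∘ c, fun w hwr => ?_, ?_⟩
  · rw [colorDegree_perm]
    refine OddProfile.comp ?_ _
    by_cases hw : ∃ e ∈ H, w ∈ f e
    · exact (hgood w hwr hw).oddProfile
    · push Not at hw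
      rw [colorDegree_eq_zero hw]
      exact fun i hi => absurd rfl hi
  · have hsingle : Pi.single δ (1 : ℕ) = Pi.single δ₀ 1 ∘ σ.symm := by
      rw [Pi.single_comp_equiv]
      simp [σ]
    rw [colorDegree_perm, hsingle]
    exact (hroot ▸ hadm.oddProfile).comp σ.symm

theorem mOddEdgeColorable_three_of_bridge [Fintype E] (hconn : (edgeGraph f univ).Connected)
    {e₀ : E} (hbr : ¬ (edgeGraph f (univ.erase e₀)).Connected) : MOddEdgeColorable f 3 := by
  obtain ⟨y, hf⟩ := Sym2.mem_iff_exists.1 (f e₀).out_fst_mem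
  set x := (f e₀).out.1
  set H' := univ.erase e₀
  have hxy : ¬ (edgeGraph f H').Reachable x y := fun h => hbr <|
    (SimpleGraph.connected_iff_exists_forall_reachable _).2
      ⟨x, fun v => reachable_erase_of_reachable hf h (hconn.preconnected x v)⟩
  obtain ⟨c₁, h₁, h₁x⟩ := exists_coloring_oddProfile_add_single f (side f H' x) x
    (fun _ he _ hu => reachable_side_of_mem he hu) 0
  obtain ⟨c₂, h₂, h₂y⟩ := exists_coloring_oddProfile_add_single f (side f H' y) y
    (fun _ he _ hu => reachable_side_of_mem he hu) 0
  let c : E → Fin 3 := fun e => if e = e₀ then 0 else if e ∈ side f H' y then c₂ e else c₁ e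
  refine ⟨c, fun i v => ?_⟩
  rw [ncard_eq_colorDegree]
  revert i
  rcases reachable_erase_or hf (hconn.preconnected x v) with hv | hv
  · refine oddProfile_of_side (mem_univ e₀) hf hxy hv (fun e he => ?_) h₁ (by simpa [c] using h₁x)
    have hy : e ∉ side f H' y := disjoint_left.1 (disjoint_side hxy) he
    simp [c, ne_of_mem_erase (side_subset he), hy]
  · refine oddProfile_of_side (mem_univ e₀) (hf.trans Sym2.eq_swap) (fun h => hxy h.symm) hv
      (fun e he => ?_) h₂ (by simpa [c] using h₂y)
    simp [c, H', ne_of_mem_erase (side_subset he), he]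

end OddColoring

theorem stmt4_general {V E : Type*} [Fintype E] (f : E → Sym2 V)
    (hconn : (SimpleGraph.fromEdgeSet (Set.range f)).Connected)
    (e₀ : E)
    (hbridge : ¬ (SimpleGraph.fromEdgeSet (f '' {e | e ≠ e₀})).Connected) :
    MOddEdgeColorable f 3 := by
  refine OddColoring.mOddEdgeColorable_three_of_bridge f ?_ (e₀ := e₀) ?_
  · simpa [OddColoring.edgeGraph] using hconn
  · convert hbridge using 2
    ext
    simp [OddColoring.edgeGraph_adj]

/-- A connected multigraph of odd order containing a bridge is odd 3-edge-colorable. -/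
theorem stmt4 {V E : Type*} [Fintype V] [Fintype E] (f : E → Sym2 V)
    (hloopless : ∀ e, ¬ (f e).IsDiag)
    (hconn : (SimpleGraph.fromEdgeSet (Set.range f)).Connected)
    (hodd : Odd (Fintype.card V))
    (e₀ : E)
    (hbridge : ¬ (SimpleGraph.fromEdgeSet (f '' {e | e ≠ e₀})).Connected) :
    MOddEdgeColorable f 3 :=
  stmt4_general f hconn e₀ hbridge
end

section
/- Let G be a multigraph obtained from a connected cubic bipartite multigraph by subdividing a single edge. Then the odd chromatic index of G equals 4, i.e., G is odd 4-edge-colorable but not odd 3-edge-colorable. -/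
open Finset

section Helpers

lemma card_filter_subtype' {E : Type*} [Fintype E] (q : E → Prop) [DecidablePred q]
    (P : E → Prop) [DecidablePred P] :
    (univ.filter fun e : {e // q e} => P e.1).card = (univ.filter fun e => q e ∧ P e).card := by
  classical
  rw [← Fintype.card_subtype, ← Fintype.card_subtype]
  exact Fintype.card_congr (Equiv.subtypeSubtypeEquivSubtypeInter q P)

lemma card_filter_sumType' {α β : Type*} [Fintype α] [Fintype β] (P : α ⊕ β → Prop)
    [DecidablePred P] :
    (univ.filter P).card = (univ.filter fun a => P (Sum.inl a)).card
      + (univ.filter fun b => P (Sum.inr b)).card := by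
  classical
  rw [← Fintype.card_subtype, ← Fintype.card_subtype, ← Fintype.card_subtype,
    ← Fintype.card_sum]
  exact Fintype.card_congr Equiv.subtypeSum

lemma card_filter_bool' (Q : Bool → Prop) [DecidablePred Q] :
    (univ.filter Q).card = (if Q true then 1 else 0) + (if Q false then 1 else 0) := by
  rw [Fintype.univ_bool]
  by_cases h1 : Q true <;> by_cases h2 : Q false <;>
    simp [Finset.filter_insert, Finset.filter_singleton, h1, h2]

end Helpers

lemma matching_lemma' {V E : Type*} [Fintype V] [Fintype E] [DecidableEq V] [DecidableEq E]
    (f : E → Sym2 V) (p : V → Bool)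
    (hb : ∀ e, ∃ a b, f e = s(a, b) ∧ p a = true ∧ p b = false)
    (k : ℕ) (hk : 0 < k)
    (hreg : ∀ v, (univ.filter fun e => v ∈ f e).card = k) :
    ∃ M : Finset E, ∀ v, (M.filter fun e => v ∈ f e).card = 1 := by
  classical
  choose aE bE hfe hpa hpb using hb
  have hmem : ∀ e v, v ∈ f e ↔ v = aE e ∨ v = bE e := by
    intro e v; rw [hfe e]; exact Sym2.mem_iff
  -- degree via aE
  have hdegA : ∀ v, p v = true → (univ.filter fun e => aE e = v).card = k := by
    intro v hv
    rw [← hreg v]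
    congr 1
    ext e
    simp only [mem_filter, mem_univ, true_and, hmem]
    constructor
    · intro h; exact Or.inl h.symm
    · rintro (h | h)
      · exact h.symm
      · exfalso; rw [h, hpb e] at hv; exact Bool.false_ne_true hv
  have hdegB : ∀ v, p v = false → (univ.filter fun e => bE e = v).card = k := by
    intro v hv
    rw [← hreg v]
    congr 1
    ext e
    simp only [mem_filter, mem_univ, true_and, hmem]
    constructor
    · intro h; exact Or.inr h.symm
    · rintro (h | h)
      · exfalso; rw [h, hpa e] at hv; simp at hv
      · exact h.symm
  set ι := {v : V // p v = true}
  set t : ι → Finset V := fun a => (univ.filter fun e => aE e = a.1).image bE with ht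
  have hall : ∀ s : Finset ι, s.card ≤ (s.biUnion t).card := by
    intro s
    set s' := s.image Subtype.val with hs'
    have hs'card : s'.card = s.card := card_image_of_injective _ Subtype.val_injective
    have hEs : (univ.filter fun e => aE e ∈ s') =
        s'.biUnion (fun v => univ.filter fun e => aE e = v) := by
      ext e
      simp only [mem_filter, mem_univ, true_and, mem_biUnion]
      constructor
      · intro h; exact ⟨aE e, h, by simp⟩
      · rintro ⟨v, hv, h⟩; rw [h]; exact hv
    have hEscard : (univ.filter fun e => aE e ∈ s').card = k * s.card := by
      rw [hEs, card_biUnion]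
      · rw [← hs'card]
        rw [Finset.sum_congr rfl (fun v hv => ?_), Finset.sum_const, smul_eq_mul, mul_comm]
        obtain ⟨a, _, rfl⟩ := Finset.mem_image.mp hv
        exact hdegA a.1 a.2
      · intro x hx y hy hxy
        simp only [disjoint_left, mem_filter]
        rintro e ⟨-, h1⟩ ⟨-, h2⟩
        exact hxy (h1 ▸ h2)
    have hsub : (univ.filter fun e => aE e ∈ s') ⊆
        (s.biUnion t).biUnion (fun b => univ.filter fun e => bE e = b) := by
      intro e he
      simp only [mem_filter, mem_univ, true_and] at he
      obtain ⟨a, ha, hav⟩ := Finset.mem_image.mp he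
      rw [mem_biUnion]
      refine ⟨bE e, mem_biUnion.mpr ⟨a, ha, ?_⟩, by simp⟩
      rw [ht]
      exact Finset.mem_image.mpr ⟨e, by simp [hav], rfl⟩
    have hup : (univ.filter fun e => aE e ∈ s').card ≤ k * (s.biUnion t).card := by
      calc (univ.filter fun e => aE e ∈ s').card
          ≤ ((s.biUnion t).biUnion (fun b => univ.filter fun e => bE e = b)).card :=
            card_le_card hsub
        _ ≤ ∑ b ∈ s.biUnion t, (univ.filter fun e => bE e = b).card := card_biUnion_le
        _ ≤ ∑ _b ∈ s.biUnion t, k := by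
            refine Finset.sum_le_sum (fun b _ => ?_)
            rw [← hreg b]
            refine card_le_card (fun e he => ?_)
            simp only [mem_filter, mem_univ, true_and] at he ⊢
            rw [hmem]; exact Or.inr he.symm
        _ = k * (s.biUnion t).card := by rw [Finset.sum_const, smul_eq_mul, mul_comm]
    rw [hEscard] at hup
    exact Nat.le_of_mul_le_mul_left hup hk
  obtain ⟨g, hginj, hgt⟩ := (Finset.all_card_le_biUnion_card_iff_exists_injective t).mp hall
  have hgt' : ∀ a : ι, ∃ e, aE e = a.1 ∧ bE e = g a := by
    intro a
    have := hgt a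
    rw [ht] at this
    obtain ⟨e, he, hbe⟩ := Finset.mem_image.mp this
    exact ⟨e, (mem_filter.mp he).2, hbe⟩
  choose ed hed1 hed2 using hgt'
  have hpg : ∀ a : ι, p (g a) = false := fun a => (hed2 a) ▸ hpb (ed a)
  -- |A'| = |B'|
  set A' := univ.filter (fun v => p v = true) with hA'
  set B' := univ.filter (fun v => p v = false) with hB'
  have hcardE : ∀ (h : V → Bool → Prop), True := fun _ => trivial
  have hEA : (Fintype.card E) = k * A'.card := by
    have : (univ : Finset E) = A'.biUnion (fun v => univ.filter fun e => aE e = v) := by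
      ext e
      simp only [mem_univ, mem_biUnion, true_iff]
      exact ⟨aE e, by simp [hA', hpa e], by simp⟩
    rw [← Finset.card_univ, this, card_biUnion]
    · rw [Finset.sum_congr rfl (fun v hv => hdegA v (by simpa [hA'] using hv)),
        Finset.sum_const, smul_eq_mul, mul_comm]
    · intro x hx y hy hxy
      simp only [disjoint_left, mem_filter]
      rintro e ⟨-, h1⟩ ⟨-, h2⟩
      exact hxy (h1 ▸ h2)
  have hEB : (Fintype.card E) = k * B'.card := by
    have : (univ : Finset E) = B'.biUnion (fun v => univ.filter fun e => bE e = v) := by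
      ext e
      simp only [mem_univ, mem_biUnion, true_iff]
      exact ⟨bE e, by simp [hB', hpb e], by simp⟩
    rw [← Finset.card_univ, this, card_biUnion]
    · rw [Finset.sum_congr rfl (fun v hv => hdegB v (by simpa [hB'] using hv)),
        Finset.sum_const, smul_eq_mul, mul_comm]
    · intro x hx y hy hxy
      simp only [disjoint_left, mem_filter]
      rintro e ⟨-, h1⟩ ⟨-, h2⟩
      exact hxy (h1 ▸ h2)
  have hAB : A'.card = B'.card := Nat.eq_of_mul_eq_mul_left hk (hEA ▸ hEB)
  -- image of g is all of B'
  have hgimg : (univ.image (fun a : ι => g a)) = B' := by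
    refine Finset.eq_of_subset_of_card_le (fun v hv => ?_) ?_
    · obtain ⟨a, _, rfl⟩ := Finset.mem_image.mp hv
      simp [hB', hpg a]
    · rw [card_image_of_injective _ hginj, Finset.card_univ, ← hAB]
      have : Fintype.card ι = A'.card := by
        rw [hA', Fintype.card_subtype]
      rw [this]
  have hedinj : Function.Injective ed := by
    intro a a' h
    apply Subtype.ext
    rw [← hed1 a, ← hed1 a', h]
  refine ⟨univ.image ed, fun v => ?_⟩
  rw [Finset.card_eq_one]
  cases hv : p v with
  | true =>
    refine ⟨ed ⟨v, hv⟩, ?_⟩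
    rw [Finset.eq_singleton_iff_unique_mem]
    constructor
    · rw [mem_filter]
      refine ⟨Finset.mem_image.mpr ⟨⟨v, hv⟩, mem_univ _, rfl⟩, ?_⟩
      rw [hmem]; exact Or.inl (hed1 ⟨v, hv⟩).symm
    · intro y hy
      rw [mem_filter] at hy
      obtain ⟨a', -, rfl⟩ := Finset.mem_image.mp hy.1
      have := hy.2
      rw [hmem] at this
      rcases this with h | h
      · congr 1
        apply Subtype.ext
        rw [← hed1 a', ← h]
      · exfalso; rw [h, hpb] at hv; exact Bool.false_ne_true hv
  | false =>
    have hvB : v ∈ B' := by simp [hB', hv]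
    rw [← hgimg] at hvB
    obtain ⟨a, -, hga⟩ := Finset.mem_image.mp hvB
    refine ⟨ed a, ?_⟩
    rw [Finset.eq_singleton_iff_unique_mem]
    constructor
    · rw [mem_filter]
      refine ⟨Finset.mem_image.mpr ⟨a, mem_univ _, rfl⟩, ?_⟩
      rw [hmem]; exact Or.inr (by rw [hed2 a, hga])
    · intro y hy
      rw [mem_filter] at hy
      obtain ⟨a', -, rfl⟩ := Finset.mem_image.mp hy.1
      have := hy.2
      rw [hmem] at this
      rcases this with h | h
      · exfalso; rw [h, hpa] at hv; simp at hv
      · congr 1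
        apply hginj
        rw [← hed2 a', ← h, hga]

lemma exists_proper' {V E : Type*} [Fintype V] [Fintype E] [DecidableEq V] [DecidableEq E]
    (f : E → Sym2 V) (p : V → Bool)
    (hb : ∀ e, ∃ a b, f e = s(a, b) ∧ p a = true ∧ p b = false)
    (hreg : ∀ v, (univ.filter fun e => v ∈ f e).card = 3) :
    ∃ c : E → Fin 3, ∀ (v : V) (j : Fin 3),
      (univ.filter fun e => v ∈ f e ∧ c e = j).card = 1 := by
  classical
  obtain ⟨M1, hM1⟩ := matching_lemma' f p hb 3 (by norm_num) hreg
  have hreg2 : ∀ v, (univ.filter fun e : {e // e ∉ M1} => v ∈ f e.1).card = 2 := by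
    intro v
    have h := card_filter_subtype' (q := fun e : E => e ∉ M1) (P := fun e => v ∈ f e)
    rw [h]
    have hsplit := Finset.card_filter_add_card_filter_not
      (s := univ.filter fun e : E => v ∈ f e) (p := fun e => e ∈ M1)
    rw [Finset.filter_filter, Finset.filter_filter, hreg v] at hsplit
    have h1 : (univ.filter fun e : E => v ∈ f e ∧ e ∈ M1) = M1.filter fun e => v ∈ f e := by
      ext e; simp [and_comm]
    rw [h1, hM1 v] at hsplit
    have h2 : (univ.filter fun e : E => e ∉ M1 ∧ v ∈ f e)
        = univ.filter fun e : E => v ∈ f e ∧ ¬ e ∈ M1 := by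
      ext e; simp [and_comm]
    rw [h2]
    omega
  obtain ⟨M2, hM2⟩ := matching_lemma' (fun e : {e // e ∉ M1} => f e.1) p
    (fun e => hb e.1) 2 (by norm_num) hreg2
  set M2' : Finset E := M2.image Subtype.val with hM2'def
  have hM2'card : ∀ v, (M2'.filter fun e => v ∈ f e).card = 1 := by
    intro v
    rw [← hM2 v]
    have himg : M2'.filter (fun e => v ∈ f e)
        = (M2.filter fun e : {e // e ∉ M1} => v ∈ f e.1).image Subtype.val := by
      ext e
      simp only [hM2'def, Finset.mem_image, Finset.mem_filter]
      constructor
      · rintro ⟨⟨a, ha, rfl⟩, hv⟩; exact ⟨a, ⟨ha, hv⟩, rfl⟩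
      · rintro ⟨a, ⟨ha, hv⟩, rfl⟩; exact ⟨⟨a, ha, rfl⟩, hv⟩
    rw [himg, Finset.card_image_of_injective _ Subtype.val_injective]
  have hM2M1 : ∀ e, e ∈ M2' → e ∉ M1 := by
    intro e he; obtain ⟨a, -, rfl⟩ := Finset.mem_image.mp he; exact a.2
  set c : E → Fin 3 := fun e => if e ∈ M1 then 0 else if e ∈ M2' then 1 else 2 with hcdef
  have hc0 : ∀ e, c e = 0 ↔ e ∈ M1 := by
    intro e; simp only [hcdef]
    split_ifs with h1 h2
    · simp [h1]
    · simp [h1]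
    · simp [h1]
  have hc1 : ∀ e, c e = 1 ↔ e ∈ M2' := by
    intro e; simp only [hcdef]
    split_ifs with h1 h2
    · exact iff_of_false (by decide) (fun h => hM2M1 e h h1)
    · simp [h2]
    · simp [h2]
  refine ⟨c, fun v j => ?_⟩
  have e0 : (univ.filter fun e => v ∈ f e ∧ c e = 0).card = 1 := by
    rw [← hM1 v]; congr 1; ext e; simp [hc0, and_comm]
  have e1 : (univ.filter fun e => v ∈ f e ∧ c e = 1).card = 1 := by
    rw [← hM2'card v]; congr 1; ext e; simp [hc1, and_comm]
  have hsum : (univ.filter fun e => v ∈ f e ∧ c e = 0).card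
      + (univ.filter fun e => v ∈ f e ∧ c e = 1).card
      + (univ.filter fun e => v ∈ f e ∧ c e = 2).card = 3 := by
    have hf := Finset.card_eq_sum_card_fiberwise
      (f := c) (s := univ.filter fun e : E => v ∈ f e) (t := univ) (fun x _ => mem_univ _)
    rw [hreg v, Fin.sum_univ_three] at hf
    simp only [Finset.filter_filter] at hf
    omega
  fin_cases j
  · exact e0
  · exact e1
  · simpa using by omega



/-- The multigraph obtained from `f : E → Sym2 V` by subdividing the edge `e₀ = s(u₀, v₀)`:
the new vertex is `none : Option V`, the edge `e₀` is replaced by the two edges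
`s(some u₀, none)` and `s(some v₀, none)`. -/
def subdivide {V E : Type*} (f : E → Sym2 V) (e₀ : E) (u₀ v₀ : V) :
    ({e : E // e ≠ e₀} ⊕ Bool) → Sym2 (Option V) :=
  Sum.elim (fun e => (f e.1).map some)
    (fun b => if b then s(some u₀, none) else s(some v₀, none))

/-- If `G` is obtained from a connected cubic bipartite multigraph by subdividing a single
edge, then the odd chromatic index of `G` is 4: it is odd 4-edge-colorable but not
odd 3-edge-colorable. -/
theorem stmt5 {V E : Type*} [Fintype V] [Fintype E] (f : E → Sym2 V)
    (hloopless : ∀ e, ¬ (f e).IsDiag)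
    (hconn : (SimpleGraph.fromEdgeSet (Set.range f)).Connected)
    (hcubic : ∀ v : V, {e : E | v ∈ f e}.ncard = 3)
    (p : V → Bool)
    (hbip : ∀ e : E, ∀ u ∈ f e, ∀ v ∈ f e, u ≠ v → p u ≠ p v)
    (e₀ : E) (u₀ v₀ : V) (hf₀ : f e₀ = s(u₀, v₀)) :
    MOddEdgeColorable (subdivide f e₀ u₀ v₀) 4 ∧
      ¬ MOddEdgeColorable (subdivide f e₀ u₀ v₀) 3 := by
  classical
  -- basic facts
  have huv : u₀ ≠ v₀ := by
    have := hloopless e₀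
    rw [hf₀, Sym2.mk_isDiag_iff] at this
    exact this
  have hu₀ : u₀ ∈ f e₀ := by rw [hf₀]; exact Sym2.mem_mk_left _ _
  have hv₀ : v₀ ∈ f e₀ := by rw [hf₀]; exact Sym2.mem_mk_right _ _
  have hpuv : p u₀ ≠ p v₀ := hbip e₀ u₀ hu₀ v₀ hv₀ huv
  set p' : V → Bool := fun v => p v == p u₀ with hp'
  have hp'iff : ∀ v, p' v = true ↔ p v = p u₀ := by intro v; simp [hp']
  have hp'iff' : ∀ v, p' v = false ↔ p v ≠ p u₀ := by intro v; simp [hp']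
  have hpu' : p' u₀ = true := by simp [hp']
  have hpv' : p' v₀ = false := by rw [hp'iff']; exact fun h => hpuv h.symm
  have hb' : ∀ e, ∃ a b, f e = s(a, b) ∧ p' a = true ∧ p' b = false := by
    intro e
    obtain ⟨⟨a, b⟩, hab⟩ := Quot.exists_rep (f e)
    have hfe : f e = s(a, b) := hab.symm
    have hane : a ≠ b := by
      have := hloopless e
      rw [hfe, Sym2.mk_isDiag_iff] at this
      exact this
    have hpab : p a ≠ p b := hbip e a (by rw [hfe]; exact Sym2.mem_mk_left _ _)
      b (by rw [hfe]; exact Sym2.mem_mk_right _ _) hane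
    by_cases hpa : p a = p u₀
    · exact ⟨a, b, hfe, (hp'iff a).mpr hpa, (hp'iff' b).mpr (fun h => hpab (hpa.trans h.symm))⟩
    · refine ⟨b, a, by rw [hfe, Sym2.eq_swap], (hp'iff b).mpr ?_, (hp'iff' a).mpr hpa⟩
      cases hA : p a <;> cases hB : p b <;> cases hU : p u₀ <;> simp_all
  have hreg3 : ∀ v, (univ.filter fun e => v ∈ f e).card = 3 := by
    intro v
    have h := hcubic v
    rwa [show {e | v ∈ f e} = ↑(univ.filter fun e => v ∈ f e) by ext e; simp,
      Set.ncard_coe_finset] at h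
  -- membership facts for the subdivided graph
  have hminl : ∀ (e : {e // e ≠ e₀}) (w : V),
      ((some w : Option V) ∈ subdivide f e₀ u₀ v₀ (Sum.inl e)) ↔ w ∈ f e.1 := by
    intro e w
    simp [subdivide, Sym2.mem_map]
  have hmnone : ∀ (e : {e // e ≠ e₀}),
      ¬ ((none : Option V) ∈ subdivide f e₀ u₀ v₀ (Sum.inl e)) := by
    intro e
    simp [subdivide, Sym2.mem_map]
  have hminrT : ∀ (w : V),
      ((some w : Option V) ∈ subdivide f e₀ u₀ v₀ (Sum.inr true)) ↔ w = u₀ := by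
    intro w; simp [subdivide, Sym2.mem_iff]
  have hminrF : ∀ (w : V),
      ((some w : Option V) ∈ subdivide f e₀ u₀ v₀ (Sum.inr false)) ↔ w = v₀ := by
    intro w; simp [subdivide, Sym2.mem_iff]
  have hmnoneT : ((none : Option V) ∈ subdivide f e₀ u₀ v₀ (Sum.inr true)) := by
    simp [subdivide]
  have hmnoneF : ((none : Option V) ∈ subdivide f e₀ u₀ v₀ (Sum.inr false)) := by
    simp [subdivide]
  constructor
  · -- upper bound : odd 4-edge-colorable
    obtain ⟨c, hcp⟩ := exists_proper' f p' hb' hreg3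
    have huniq : ∀ (w : V) (e e' : E), w ∈ f e → w ∈ f e' → c e = c e' → e = e' := by
      intro w e e' he he' hce
      have h1 := hcp w (c e)
      rw [Finset.card_eq_one] at h1
      obtain ⟨x, hx⟩ := h1
      have hxe : e ∈ univ.filter fun e'' => w ∈ f e'' ∧ c e'' = c e := by
        simp [he]
      have hxe' : e' ∈ univ.filter fun e'' => w ∈ f e'' ∧ c e'' = c e := by
        simp [he', hce.symm]
      rw [hx, Finset.mem_singleton] at hxe hxe'
      rw [hxe, hxe']
    refine ⟨Sum.elim (fun e => (c e.1).castSucc)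
      (fun b => if b then (c e₀).castSucc else 3), fun i v => ?_⟩
    intro hne
    have hsub : {e' | v ∈ subdivide f e₀ u₀ v₀ e' ∧
        Sum.elim (fun e => (c e.1).castSucc)
          (fun b => if b then (c e₀).castSucc else 3) e' = i}.Subsingleton := by
      rintro x ⟨hxm, hxc⟩ y ⟨hym, hyc⟩
      rcases x with ex | bx <;> rcases y with ey | by'
      · -- inl / inl
        simp only [Sum.elim_inl] at hxc hyc
        rcases hv : v with _ | w
        · exact absurd (hv ▸ hxm) (hmnone ex)
        · subst hv
          rw [hminl] at hxm hym
          have : ex.1 = ey.1 :=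
            huniq w ex.1 ey.1 hxm hym (Fin.castSucc_inj.mp (hxc.trans hyc.symm))
          exact congrArg Sum.inl (Subtype.ext this)
      · -- inl / inr
        exfalso
        simp only [Sum.elim_inl, Sum.elim_inr] at hxc hyc
        cases by' with
        | true =>
          rw [if_pos rfl] at hyc
          rcases hv : v with _ | w
          · exact (hmnone ex) (hv ▸ hxm)
          · subst hv
            rw [hminl] at hxm
            rw [hminrT] at hym
            subst hym
            exact ex.2 (huniq w ex.1 e₀ hxm hu₀ (Fin.castSucc_inj.mp (hxc.trans hyc.symm)))
        | false =>
          rw [if_neg (by simp)] at hyc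
          have h3 : (c ex.1).castSucc = (3 : Fin 4) := hxc.trans hyc.symm
          have h4 := congrArg Fin.val h3
          rw [Fin.coe_castSucc] at h4
          have := (c ex.1).isLt
          simp at h4
          omega
      · -- inr / inl
        exfalso
        simp only [Sum.elim_inl, Sum.elim_inr] at hxc hyc
        cases bx with
        | true =>
          rw [if_pos rfl] at hxc
          rcases hv : v with _ | w
          · exact (hmnone ey) (hv ▸ hym)
          · subst hv
            rw [hminl] at hym
            rw [hminrT] at hxm
            subst hxm
            exact ey.2 (huniq w ey.1 e₀ hym hu₀ (Fin.castSucc_inj.mp (hyc.trans hxc.symm)))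
        | false =>
          rw [if_neg (by simp)] at hxc
          have h3 : (c ey.1).castSucc = (3 : Fin 4) := hyc.trans hxc.symm
          have h4 := congrArg Fin.val h3
          rw [Fin.coe_castSucc] at h4
          have := (c ey.1).isLt
          simp at h4
          omega
      · -- inr / inr
        have key : (c e₀).castSucc = i → (3 : Fin 4) = i → False := by
          intro h1 h2
          have h3 : (c e₀).castSucc = (3 : Fin 4) := h1.trans h2.symm
          have h4 := congrArg Fin.val h3
          rw [Fin.coe_castSucc] at h4
          have := (c e₀).isLt
          simp at h4
          omega
        cases bx <;> cases by'
        · rfl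
        · exact (key (by simpa using hyc) (by simpa using hxc)).elim
        · exact (key (by simpa using hxc) (by simpa using hyc)).elim
        · rfl
    rcases hsub.eq_empty_or_singleton with h | ⟨x, h⟩
    · rw [h] at hne; simp at hne
    · rw [h, Set.ncard_singleton]; exact odd_one
  · -- lower bound : not odd 3-edge-colorable
    rintro ⟨c, hc⟩
    -- the two new edges have different colors
    have hcc : c (Sum.inr true) ≠ c (Sum.inr false) := by
      intro hEq
      have h2 := hc (c (Sum.inr true)) none
      have hset : {e' | (none : Option V) ∈ subdivide f e₀ u₀ v₀ e' ∧ c e' = c (Sum.inr true)}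
          = {Sum.inr true, Sum.inr false} := by
        ext e'
        simp only [Set.mem_setOf_eq, Set.mem_insert_iff, Set.mem_singleton_iff]
        constructor
        · rintro ⟨hm, -⟩
          rcases e' with e | b
          · exact absurd hm (hmnone e)
          · cases b
            · right; rfl
            · left; rfl
        · rintro (rfl | rfl)
          · exact ⟨hmnoneT, rfl⟩
          · exact ⟨hmnoneF, hEq.symm⟩
      rw [hset, Set.ncard_pair (by simp)] at h2
      have := h2 (by norm_num)
      rw [Nat.odd_iff] at this
      norm_num at this
    -- degree counting setup
    obtain ⟨d, hd⟩ : ∃ d : Fin 3 → V → ℕ, ∀ (j : Fin 3) (w : V),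
        d j w = (univ.filter fun e' =>
          (some w : Option V) ∈ subdivide f e₀ u₀ v₀ e' ∧ c e' = j).card :=
      ⟨_, fun _ _ => rfl⟩
    have hcases : ∀ j : Fin 3, j = 0 ∨ j = 1 ∨ j = 2 := by decide
    -- total degree of an original vertex is 3
    have dT : ∀ w : V,
        (univ.filter fun e' => (some w : Option V) ∈ subdivide f e₀ u₀ v₀ e').card = 3 := by
      intro w
      rw [card_filter_sumType' (fun e' => (some w : Option V) ∈ subdivide f e₀ u₀ v₀ e')]
      have hinl : (univ.filter fun e : {e // e ≠ e₀} =>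
          (some w : Option V) ∈ subdivide f e₀ u₀ v₀ (Sum.inl e)).card
          = (univ.filter fun e => e ≠ e₀ ∧ w ∈ f e).card := by
        simp only [hminl]
        exact card_filter_subtype' (fun e => e ≠ e₀) (fun e => w ∈ f e)
      have hinr : (univ.filter fun b : Bool =>
          (some w : Option V) ∈ subdivide f e₀ u₀ v₀ (Sum.inr b)).card
          = (if w = u₀ then 1 else 0) + (if w = v₀ then 1 else 0) := by
        rw [card_filter_bool']
        simp only [hminrT, hminrF]
      rw [hinl, hinr]
      have h1 : (univ.filter fun e => w ∈ f e ∧ e = e₀) = if w ∈ f e₀ then {e₀} else ∅ := by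
        split_ifs with h
        · ext e
          simp only [mem_filter, mem_univ, true_and, mem_singleton]
          constructor
          · rintro ⟨-, rfl⟩; rfl
          · rintro rfl; exact ⟨h, rfl⟩
        · ext e
          simp only [mem_filter, mem_univ, true_and, notMem_empty, iff_false, not_and]
          rintro hw rfl; exact h hw
      have hsplit := Finset.card_filter_add_card_filter_not
        (s := univ.filter fun e : E => w ∈ f e) (p := fun e => e = e₀)
      rw [Finset.filter_filter, Finset.filter_filter, hreg3 w, h1] at hsplit
      have h2 : (univ.filter fun e => e ≠ e₀ ∧ w ∈ f e)
          = univ.filter fun e => w ∈ f e ∧ ¬ e = e₀ := by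
        ext e; simp only [mem_filter]; tauto
      rw [h2]
      have hmemf : w ∈ f e₀ ↔ w = u₀ ∨ w = v₀ := by rw [hf₀]; exact Sym2.mem_iff
      by_cases hwu : w = u₀
      · have hnv : ¬ w = v₀ := by rw [hwu]; exact huv
        rw [if_pos hwu, if_neg hnv]
        rw [if_pos (hmemf.mpr (Or.inl hwu))] at hsplit
        simp only [Finset.card_singleton] at hsplit
        omega
      · by_cases hwv : w = v₀
        · rw [if_neg hwu, if_pos hwv]
          rw [if_pos (hmemf.mpr (Or.inr hwv))] at hsplit
          simp only [Finset.card_singleton] at hsplit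
          omega
        · rw [if_neg hwu, if_neg hwv]
          rw [if_neg (fun h => by rcases hmemf.mp h with h | h; exacts [hwu h, hwv h])] at hsplit
          simp only [Finset.card_empty] at hsplit
          omega
    have dtot : ∀ w : V, d 0 w + d 1 w + d 2 w = 3 := by
      intro w
      have hfib := Finset.card_eq_sum_card_fiberwise
        (f := c) (s := univ.filter fun e' => (some w : Option V) ∈ subdivide f e₀ u₀ v₀ e')
        (t := univ) (fun x _ => mem_univ _)
      rw [Fin.sum_univ_three, dT w] at hfib
      simp only [Finset.filter_filter] at hfib
      rw [hd 0 w, hd 1 w, hd 2 w]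
      omega
    -- ncard/Finset card conversion
    have hnc : ∀ (j : Fin 3) (w : Option V),
        {e' | w ∈ subdivide f e₀ u₀ v₀ e' ∧ c e' = j}.ncard
          = (univ.filter fun e' => w ∈ subdivide f e₀ u₀ v₀ e' ∧ c e' = j).card := by
      intro j w
      rw [← Set.ncard_coe_finset]
      congr 1
      ext e'
      simp
    -- each color-degree is 0, 1 or 3
    have dvals : ∀ (j : Fin 3) (w : V), d j w = 0 ∨ d j w = 1 ∨ d j w = 3 := by
      intro j w
      rcases Nat.eq_zero_or_pos (d j w) with h | h
      · exact Or.inl h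
      · have hodd := hc j (some w)
        rw [hnc j (some w), ← hd j w] at hodd
        obtain ⟨m, hm⟩ := hodd (by omega)
        have hle : d j w ≤ 3 := by
          rw [hd j w]
          refine le_trans (Finset.card_le_card ?_) (le_of_eq (dT w))
          intro e' he'
          rw [mem_filter] at he' ⊢
          exact ⟨he'.1, he'.2.1⟩
        omega
    -- a vertex has color-degree one in some color iff it is "rainbow"
    have hR : ∀ (w : V) (j : Fin 3), d j w = 1 ↔ d 0 w = 1 := by
      intro w j
      have h0 := dvals 0 w
      have h1 := dvals 1 w
      have h2 := dvals 2 w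
      have ht := dtot w
      rcases hcases j with rfl | rfl | rfl
      · exact Iff.rfl
      · constructor <;> intro <;> omega
      · constructor <;> intro <;> omega
    -- the two sides of the bipartition
    choose aE bE hfe2 hpa2 hpb2 using hb'
    set A : Finset V := univ.filter (fun v : V => p' v = true) with hA
    set B : Finset V := univ.filter (fun v : V => p' v = false) with hB
    -- number of A-endpoints of each edge
    have hcntA : ∀ e', (A.filter fun w => (some w : Option V) ∈ subdivide f e₀ u₀ v₀ e').card
        = Sum.elim (fun _ => 1) (fun b => if b then 1 else 0) e' := by
      rintro (e | b)
      · simp only [Sum.elim_inl]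
        have heq : (A.filter fun w => (some w : Option V) ∈ subdivide f e₀ u₀ v₀ (Sum.inl e))
            = {aE e.1} := by
          ext w
          simp only [hA, mem_filter, mem_univ, true_and, mem_singleton, hminl]
          constructor
          · rintro ⟨hpw, hwf⟩
            rw [hfe2 e.1, Sym2.mem_iff] at hwf
            rcases hwf with rfl | rfl
            · rfl
            · rw [hpb2 e.1] at hpw; exact absurd hpw (by simp)
          · rintro rfl
            refine ⟨hpa2 e.1, ?_⟩
            rw [hfe2 e.1]; exact Sym2.mem_mk_left _ _
        rw [heq, Finset.card_singleton]
      · cases b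
        · show _ = (0:ℕ)
          rw [Finset.card_eq_zero, Finset.eq_empty_iff_forall_notMem]
          intro w hw
          rw [mem_filter, hminrF] at hw
          obtain ⟨hwA, rfl⟩ := hw
          rw [hA, mem_filter, hpv'] at hwA
          exact absurd hwA.2 (by simp)
        · show _ = (1:ℕ)
          have heq : (A.filter fun w => (some w : Option V) ∈ subdivide f e₀ u₀ v₀ (Sum.inr true))
              = {u₀} := by
            ext w
            simp only [mem_filter, mem_singleton, hminrT]
            constructor
            · rintro ⟨-, rfl⟩; rfl
            · rintro rfl
              exact ⟨by rw [hA]; simp [hpu'], rfl⟩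
          rw [heq, Finset.card_singleton]
    have hcntB : ∀ e', (B.filter fun w => (some w : Option V) ∈ subdivide f e₀ u₀ v₀ e').card
        = Sum.elim (fun _ => 1) (fun b => if b then 0 else 1) e' := by
      rintro (e | b)
      · simp only [Sum.elim_inl]
        have heq : (B.filter fun w => (some w : Option V) ∈ subdivide f e₀ u₀ v₀ (Sum.inl e))
            = {bE e.1} := by
          ext w
          simp only [hB, mem_filter, mem_univ, true_and, mem_singleton, hminl]
          constructor
          · rintro ⟨hpw, hwf⟩
            rw [hfe2 e.1, Sym2.mem_iff] at hwf
            rcases hwf with rfl | rfl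
            · rw [hpa2 e.1] at hpw; exact absurd hpw (by simp)
            · rfl
          · rintro rfl
            refine ⟨hpb2 e.1, ?_⟩
            rw [hfe2 e.1]; exact Sym2.mem_mk_right _ _
        rw [heq, Finset.card_singleton]
      · cases b
        · show _ = (1:ℕ)
          have heq : (B.filter fun w => (some w : Option V) ∈ subdivide f e₀ u₀ v₀ (Sum.inr false))
              = {v₀} := by
            ext w
            simp only [mem_filter, mem_singleton, hminrF]
            constructor
            · rintro ⟨-, rfl⟩; rfl
            · rintro rfl
              exact ⟨by rw [hB]; simp [hpv'], rfl⟩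
          rw [heq, Finset.card_singleton]
        · show _ = (0:ℕ)
          rw [Finset.card_eq_zero, Finset.eq_empty_iff_forall_notMem]
          intro w hw
          rw [mem_filter, hminrT] at hw
          obtain ⟨hwB, rfl⟩ := hw
          rw [hB, mem_filter, hpu'] at hwB
          exact absurd hwB.2 (by simp)
    -- the two counting identities
    have idA : ∀ j : Fin 3,
        (∑ w ∈ A, d j w) + (if c (Sum.inr false) = j then 1 else 0)
          = (univ.filter fun e' => c e' = j).card := by
      intro j
      have h1 : (∑ w ∈ A, d j w)
          = ∑ e' : ({e : E // e ≠ e₀} ⊕ Bool),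
              (if c e' = j then Sum.elim (fun _ => 1) (fun b => if b then 1 else 0) e' else 0) := by
        calc (∑ w ∈ A, d j w)
            = ∑ w ∈ A, ∑ e' : ({e : E // e ≠ e₀} ⊕ Bool),
                (if ((some w : Option V) ∈ subdivide f e₀ u₀ v₀ e' ∧ c e' = j) then 1 else 0) := by
              refine Finset.sum_congr rfl fun w _ => ?_
              rw [hd j w, Finset.card_filter]
          _ = ∑ e' : ({e : E // e ≠ e₀} ⊕ Bool), ∑ w ∈ A,
                (if ((some w : Option V) ∈ subdivide f e₀ u₀ v₀ e' ∧ c e' = j) then 1 else 0) :=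
              Finset.sum_comm
          _ = _ := by
              refine Finset.sum_congr rfl fun e' _ => ?_
              by_cases hce : c e' = j
              · rw [if_pos hce,
                  Finset.sum_congr rfl (fun w _ => if_congr (and_iff_left hce) rfl rfl),
                  ← Finset.card_filter]
                exact hcntA e'
              · simp [hce]
      rw [h1, Finset.card_filter]
      have h2 : ∀ e' ∈ (univ : Finset ({e : E // e ≠ e₀} ⊕ Bool)), (if c e' = j then (1:ℕ) else 0)
          = (if c e' = j then Sum.elim (fun _ => 1) (fun b => if b then 1 else 0) e' else 0)
            + (if e' = Sum.inr false then (if c e' = j then 1 else 0) else 0) := by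
        rintro (e | b) -
        · simp
        · cases b
          · by_cases hce : c (Sum.inr false) = j <;> simp [hce]
          · simp
      rw [Finset.sum_congr rfl h2, Finset.sum_add_distrib]
      have h3 : (∑ e' : ({e : E // e ≠ e₀} ⊕ Bool),
          (if e' = Sum.inr false then (if c e' = j then (1:ℕ) else 0) else 0))
          = (if c (Sum.inr false) = j then 1 else 0) := by
        rw [Finset.sum_eq_single (Sum.inr false)]
        · simp
        · intro b _ hb; rw [if_neg hb]
        · intro h; exact absurd (mem_univ _) h
      rw [h3]
    have idB : ∀ j : Fin 3,
        (∑ w ∈ B, d j w) + (if c (Sum.inr true) = j then 1 else 0)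
          = (univ.filter fun e' => c e' = j).card := by
      intro j
      have h1 : (∑ w ∈ B, d j w)
          = ∑ e' : ({e : E // e ≠ e₀} ⊕ Bool),
              (if c e' = j then Sum.elim (fun _ => 1) (fun b => if b then 0 else 1) e' else 0) := by
        calc (∑ w ∈ B, d j w)
            = ∑ w ∈ B, ∑ e' : ({e : E // e ≠ e₀} ⊕ Bool),
                (if ((some w : Option V) ∈ subdivide f e₀ u₀ v₀ e' ∧ c e' = j) then 1 else 0) := by
              refine Finset.sum_congr rfl fun w _ => ?_
              rw [hd j w, Finset.card_filter]
          _ = ∑ e' : ({e : E // e ≠ e₀} ⊕ Bool), ∑ w ∈ B,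
                (if ((some w : Option V) ∈ subdivide f e₀ u₀ v₀ e' ∧ c e' = j) then 1 else 0) :=
              Finset.sum_comm
          _ = _ := by
              refine Finset.sum_congr rfl fun e' _ => ?_
              by_cases hce : c e' = j
              · rw [if_pos hce,
                  Finset.sum_congr rfl (fun w _ => if_congr (and_iff_left hce) rfl rfl),
                  ← Finset.card_filter]
                exact hcntB e'
              · simp [hce]
      rw [h1, Finset.card_filter]
      have h2 : ∀ e' ∈ (univ : Finset ({e : E // e ≠ e₀} ⊕ Bool)), (if c e' = j then (1:ℕ) else 0)
          = (if c e' = j then Sum.elim (fun _ => 1) (fun b => if b then 0 else 1) e' else 0)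
            + (if e' = Sum.inr true then (if c e' = j then 1 else 0) else 0) := by
        rintro (e | b) -
        · simp
        · cases b
          · simp
          · by_cases hce : c (Sum.inr true) = j <;> simp [hce]
      rw [Finset.sum_congr rfl h2, Finset.sum_add_distrib]
      have h3 : (∑ e' : ({e : E // e ≠ e₀} ⊕ Bool),
          (if e' = Sum.inr true then (if c e' = j then (1:ℕ) else 0) else 0))
          = (if c (Sum.inr true) = j then 1 else 0) := by
        rw [Finset.sum_eq_single (Sum.inr true)]
        · simp
        · intro b _ hb; rw [if_neg hb]
        · intro h; exact absurd (mem_univ _) h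
      rw [h3]
    -- pass to ZMod 3
    have hcast : ∀ (S : Finset V) (j : Fin 3),
        ((∑ w ∈ S, d j w : ℕ) : ZMod 3) = ((S.filter fun w => d 0 w = 1).card : ZMod 3) := by
      intro S j
      rw [← Finset.sum_boole, Nat.cast_sum]
      refine Finset.sum_congr rfl fun w _ => ?_
      rcases dvals j w with h | h | h
      · have h0 : ¬ d 0 w = 1 := fun h0 => by rw [(hR w j).mpr h0] at h; omega
        rw [h, if_neg h0]
        simp
      · rw [h, if_pos ((hR w j).mp h)]
        simp
      · have h0 : ¬ d 0 w = 1 := fun h0 => by rw [(hR w j).mpr h0] at h; omega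
        rw [h, if_neg h0]
        show ((3:ℕ) : ZMod 3) = 0
        decide
    have HA : ∀ j : Fin 3, ((A.filter fun w => d 0 w = 1).card : ZMod 3)
        + (if c (Sum.inr false) = j then 1 else 0)
        = (((univ.filter fun e' => c e' = j).card : ℕ) : ZMod 3) := by
      intro j
      have h := congrArg (Nat.cast : ℕ → ZMod 3) (idA j)
      rw [Nat.cast_add, hcast A j, apply_ite (Nat.cast : ℕ → ZMod 3),
        Nat.cast_one, Nat.cast_zero] at h
      exact h
    have HB : ∀ j : Fin 3, ((B.filter fun w => d 0 w = 1).card : ZMod 3)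
        + (if c (Sum.inr true) = j then 1 else 0)
        = (((univ.filter fun e' => c e' = j).card : ℕ) : ZMod 3) := by
      intro j
      have h := congrArg (Nat.cast : ℕ → ZMod 3) (idB j)
      rw [Nat.cast_add, hcast B j, apply_ite (Nat.cast : ℕ → ZMod 3),
        Nat.cast_one, Nat.cast_zero] at h
      exact h
    have e1 := HA (c (Sum.inr true))
    have e2 := HB (c (Sum.inr true))
    have e3 := HA (c (Sum.inr false))
    have e4 := HB (c (Sum.inr false))
    rw [if_neg (fun h => hcc h.symm)] at e1
    rw [if_pos rfl] at e2
    rw [if_pos rfl] at e3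
    rw [if_neg hcc] at e4
    have hfinal : (2 : ZMod 3) = 0 := by linear_combination e3 - e4 - e1 + e2
    exact absurd hfinal (by decide)
end

section
/- For every even n ≥ 6, the wheel W_n (a cycle of length n plus a center vertex adjacent to all cycle vertices) is odd 3-edge-colorable. -/
/-- The wheel `Wₙ`: a cycle on `ZMod n` (vertices `some i`) together with a center
vertex `none` adjacent to every cycle vertex. -/
def wheel (n : ℕ) : SimpleGraph (Option (ZMod n)) :=
  SimpleGraph.fromRel
    (fun a b => a = none ∨ ∃ i : ZMod n, a = some i ∧ b = some (i + 1))

namespace WheelAux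

/-- Color of the spoke at rim vertex `m` (numbered as a natural). -/
def spokeN (m : ℕ) : Fin 3 := if m = 0 ∨ m = 2 ∨ m = 4 then 0 else 1

/-- Color of the rim edge from vertex `m` to vertex `m+1`. -/
def edgeN : ℕ → Fin 3
  | 0 => 0
  | 1 => 2
  | 2 => 1
  | 3 => 1
  | 4 => 2
  | (v+5) => if v % 2 = 0 then 0 else 2

lemma edgeN_ge5 {m : ℕ} (h : 5 ≤ m) : edgeN m = if m % 2 = 1 then 0 else 2 := by
  obtain ⟨v, rfl⟩ : ∃ v, m = v + 5 := ⟨m - 5, by omega⟩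
  show (if v % 2 = 0 then (0 : Fin 3) else 2) = _
  have : v % 2 = 0 ∨ v % 2 = 1 := by omega
  rcases this with h | h
  · rw [if_pos h, if_pos (by omega)]
  · rw [if_neg (by omega), if_neg (by omega)]

def Good (a b c : Fin 3) : Prop := (a = b ∧ a = c) ∨ (a ≠ b ∧ a ≠ c ∧ b ≠ c)

lemma goodN (n : ℕ) (hn : 6 ≤ n) (hev : Even n) (m : ℕ) (hm : m < n) :
    Good (spokeN m) (edgeN m) (edgeN (if m = 0 then n - 1 else m - 1)) := by
  have hn2 : n % 2 = 0 := Nat.even_iff.mp hev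
  rcases m with _ | _ | _ | _ | _ | _ | v
  · rw [if_pos rfl, edgeN_ge5 (show 5 ≤ n - 1 by omega),
      if_pos (show (n - 1) % 2 = 1 by omega)]
    exact Or.inl (by decide)
  · rw [if_neg (by omega)]; exact Or.inr (by decide)
  · rw [if_neg (by omega)]; exact Or.inr (by decide)
  · rw [if_neg (by omega)]; exact Or.inl (by decide)
  · rw [if_neg (by omega)]; exact Or.inr (by decide)
  · rw [if_neg (by omega)]; exact Or.inr (by decide)
  · rw [if_neg (by omega)]
    have h1 : spokeN (v + 6) = 1 := if_neg (by omega)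
    rw [h1, edgeN_ge5 (show 5 ≤ v + 6 by omega), edgeN_ge5 (show 5 ≤ v + 6 - 1 by omega)]
    have : v % 2 = 0 ∨ v % 2 = 1 := by omega
    rcases this with h | h
    · rw [if_neg (show ¬(v + 6) % 2 = 1 by omega), if_pos (show (v + 6 - 1) % 2 = 1 by omega)]
      exact Or.inr (by decide)
    · rw [if_pos (show (v + 6) % 2 = 1 by omega), if_neg (show ¬(v + 6 - 1) % 2 = 1 by omega)]
      exact Or.inr (by decide)

lemma val_sub_one (n : ℕ) (hn : 6 ≤ n) (j : ZMod n) :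
    (j - 1).val = if j.val = 0 then n - 1 else j.val - 1 := by
  haveI : NeZero n := ⟨by omega⟩
  split_ifs with h
  · have hj : j = 0 := (ZMod.val_eq_zero j).mp h
    subst hj
    have : (0 - 1 : ZMod n) = ((n - 1 : ℕ) : ZMod n) := by
      have h1 : (1:ℕ) ≤ n := by omega
      push_cast [Nat.cast_sub h1]
      rw [ZMod.natCast_self]
    rw [this, ZMod.val_cast_of_lt (by omega)]
  · have h1 : 1 ≤ j.val := by omega
    have hlt : j.val < n := ZMod.val_lt j
    have : j - 1 = ((j.val - 1 : ℕ) : ZMod n) := by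
      conv_lhs => rw [show j = ((j.val : ℕ) : ZMod n) from (ZMod.natCast_rightInverse j).symm]
      push_cast [Nat.cast_sub h1]
      ring
    rw [this, ZMod.val_cast_of_lt (by omega)]

lemma good_zmod (n : ℕ) (hn : 6 ≤ n) (hev : Even n) (j : ZMod n) :
    Good (spokeN j.val) (edgeN j.val) (edgeN (j - 1).val) := by
  haveI : NeZero n := ⟨by omega⟩
  rw [val_sub_one n hn j]
  exact goodN n hn hev j.val (ZMod.val_lt j)

/-- The coloring function on ordered pairs of vertices. -/
def wcol (n : ℕ) : Option (ZMod n) → Option (ZMod n) → Fin 3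
  | none, none => 0
  | none, some j => spokeN j.val
  | some j, none => spokeN j.val
  | some a, some b =>
      if b = a + 1 then edgeN a.val else if a = b + 1 then edgeN b.val else 0

lemma two_ne (n : ℕ) (hn : 6 ≤ n) : (2 : ZMod n) ≠ 0 := by
  haveI : NeZero n := ⟨by omega⟩
  intro h
  have h2 : ((2 : ℕ) : ZMod n) = 0 := by push_cast; exact h
  have := ZMod.val_cast_of_lt (show 2 < n by omega)
  rw [h2, ZMod.val_zero] at this
  omega

lemma one_ne (n : ℕ) (hn : 6 ≤ n) : (1 : ZMod n) ≠ 0 := by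
  haveI : NeZero n := ⟨by omega⟩
  intro h
  have h2 : ((1 : ℕ) : ZMod n) = 0 := by push_cast; exact h
  have := ZMod.val_cast_of_lt (show 1 < n by omega)
  rw [h2, ZMod.val_zero] at this
  omega

lemma wcol_symm (n : ℕ) (hn : 6 ≤ n) : ∀ a b, wcol n a b = wcol n b a := by
  rintro (_ | a) (_ | b) <;> try rfl
  show (if b = a + 1 then edgeN a.val else if a = b + 1 then edgeN b.val else 0)
      = (if a = b + 1 then edgeN b.val else if b = a + 1 then edgeN a.val else 0)
  split_ifs with h1 h2 h2 <;> try rfl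
  exfalso
  exact two_ne n hn (by linear_combination (-1 : ZMod n) * h1 - h2)

lemma classDeg_eq {V : Type*} (G : SimpleGraph V) {k : ℕ} (c : Sym2 V → Fin k)
    (i : Fin k) (v : V) :
    classDeg G c i v = {w | G.Adj v w ∧ c s(v, w) = i}.ncard := by
  unfold classDeg
  have hset : {e : Sym2 V | e ∈ G.edgeSet ∧ c e = i ∧ v ∈ e}
      = (fun w => s(v, w)) '' {w | G.Adj v w ∧ c s(v, w) = i} := by
    ext e
    constructor
    · rintro ⟨he, hc, hv⟩
      obtain ⟨w, rfl⟩ := Sym2.mem_iff_exists.mp hv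
      exact ⟨w, ⟨G.mem_edgeSet.mp he, hc⟩, rfl⟩
    · rintro ⟨w, ⟨ha, hc⟩, rfl⟩
      exact ⟨G.mem_edgeSet.mpr ha, hc, Sym2.mem_mk_left v w⟩
  rw [hset, Set.ncard_image_of_injective _ (fun a b h => Sym2.congr_right.mp h)]

lemma ncard_sep_triple {V : Type*} (x y z : V) (hxy : x ≠ y) (hxz : x ≠ z) (hyz : y ≠ z)
    (g : V → Fin 3) (i : Fin 3)
    (h : Good (g x) (g y) (g z)) :
    {w ∈ ({x, y, z} : Set V) | g w = i}.ncard = 0 ∨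
      Odd {w ∈ ({x, y, z} : Set V) | g w = i}.ncard := by
  have hfin : ({x, y, z} : Set V).Finite :=
    (Set.finite_singleton z).insert y |>.insert x
  rcases h with ⟨h1, h2⟩ | ⟨h1, h2, h3⟩
  · by_cases hx : g x = i
    · right
      have : {w ∈ ({x, y, z} : Set V) | g w = i} = ({x, y, z} : Set V) := by
        ext w
        simp only [Set.mem_setOf_eq, Set.mem_insert_iff, Set.mem_singleton_iff]
        constructor
        · rintro ⟨hw, _⟩; exact hw
        · rintro (rfl | rfl | rfl)
          · exact ⟨Or.inl rfl, hx⟩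
          · exact ⟨Or.inr (Or.inl rfl), h1 ▸ hx⟩
          · exact ⟨Or.inr (Or.inr rfl), h2 ▸ hx⟩
      rw [this, Set.ncard_insert_of_notMem (by simp [hxy, hxz])
        ((Set.finite_singleton z).insert y), Set.ncard_pair hyz]
      exact ⟨1, rfl⟩
    · left
      have : {w ∈ ({x, y, z} : Set V) | g w = i} = (∅ : Set V) := by
        ext w
        simp only [Set.mem_setOf_eq, Set.mem_insert_iff, Set.mem_singleton_iff,
          Set.mem_empty_iff_false, iff_false, not_and]
        rintro (rfl | rfl | rfl)
        · exact hx
        · rw [← h1]; exact hx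
        · rw [← h2]; exact hx
      rw [this, Set.ncard_empty]
  · right
    have key : ∀ a b c i : Fin 3, a ≠ b → a ≠ c → b ≠ c → i = a ∨ i = b ∨ i = c := by decide
    have hsingle : ∀ w₀ : V, w₀ ∈ ({x, y, z} : Set V) → g w₀ = i →
        (∀ w ∈ ({x, y, z} : Set V), g w = i → w = w₀) →
        Odd {w ∈ ({x, y, z} : Set V) | g w = i}.ncard := by
      intro w₀ hw₀ hgw₀ huniq
      have : {w ∈ ({x, y, z} : Set V) | g w = i} = {w₀} := by
        ext w
        simp only [Set.mem_setOf_eq, Set.mem_singleton_iff]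
        constructor
        · rintro ⟨hw, hg⟩; exact huniq w hw hg
        · rintro rfl; exact ⟨hw₀, hgw₀⟩
      rw [this, Set.ncard_singleton]
      exact ⟨0, rfl⟩
    rcases key (g x) (g y) (g z) i h1 h2 h3 with hi | hi | hi
    · refine hsingle x (Or.inl rfl) hi.symm ?_
      rintro w (hw | hw | hw) hg
      · exact hw
      · exact absurd ((hw ▸ hg).trans hi) (Ne.symm h1)
      · exact absurd ((hw ▸ hg).trans hi) (Ne.symm h2)
    · refine hsingle y (Or.inr (Or.inl rfl)) hi.symm ?_
      rintro w (hw | hw | hw) hg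
      · exact absurd ((hw ▸ hg).trans hi).symm (Ne.symm h1)
      · exact hw
      · exact absurd ((hw ▸ hg).trans hi) (Ne.symm h3)
    · refine hsingle z (Or.inr (Or.inr rfl)) hi.symm ?_
      rintro w (hw | hw | hw) hg
      · exact absurd ((hw ▸ hg).trans hi).symm (Ne.symm h2)
      · exact absurd ((hw ▸ hg).trans hi).symm (Ne.symm h3)
      · exact hw

lemma spokeN_eq_zero (m : ℕ) : spokeN m = 0 ↔ (m = 0 ∨ m = 2 ∨ m = 4) := by
  unfold spokeN
  split_ifs with h
  · simp [h]
  · simp [h]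

lemma spokeN_eq_one (m : ℕ) : spokeN m = 1 ↔ ¬(m = 0 ∨ m = 2 ∨ m = 4) := by
  unfold spokeN
  split_ifs with h
  · simp [h]
  · simp [h]

lemma spokeN_ne_two (m : ℕ) : spokeN m ≠ 2 := by
  unfold spokeN
  split_ifs <;> decide

lemma val_eq_iff (n : ℕ) (hn : 6 ≤ n) (j : ZMod n) (a : ℕ) (ha : a < n) :
    j.val = a ↔ j = (a : ZMod n) := by
  haveI : NeZero n := ⟨by omega⟩
  constructor
  · intro h
    rw [← h]
    exact (ZMod.natCast_rightInverse j).symm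
  · intro h
    rw [h, ZMod.val_cast_of_lt ha]

lemma cast_ne_cast (n : ℕ) (hn : 6 ≤ n) (a b : ℕ) (ha : a < n) (hb : b < n) (hab : a ≠ b) :
    (a : ZMod n) ≠ (b : ZMod n) := by
  haveI : NeZero n := ⟨by omega⟩
  intro h
  have := congrArg ZMod.val h
  rw [ZMod.val_cast_of_lt ha, ZMod.val_cast_of_lt hb] at this
  exact hab this

end WheelAux

open WheelAux in
/-- For every even `n ≥ 6`, the wheel `Wₙ` is odd 3-edge-colorable. -/
theorem stmt10 (n : ℕ) (hn : 6 ≤ n) (heven : Even n) :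
    OddEdgeColorable (wheel n) 3 := by
  haveI : NeZero n := ⟨by omega⟩
  have h2 : (2 : ZMod n) ≠ 0 := two_ne n hn
  have h1 : (1 : ZMod n) ≠ 0 := one_ne n hn
  refine ⟨Sym2.lift ⟨wcol n, wcol_symm n hn⟩, ?_⟩
  intro i v
  rw [classDeg_eq]
  intro hne
  match v with
  | none =>
    have hSome : {w | (wheel n).Adj none w ∧ Sym2.lift ⟨wcol n, wcol_symm n hn⟩ s(none, w) = i}
        = some '' {j : ZMod n | spokeN j.val = i} := by
      ext w
      cases w with
      | none =>
        simp only [Set.mem_setOf_eq, Set.mem_image, Set.mem_setOf_eq]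
        constructor
        · rintro ⟨hadj, -⟩
          exact absurd rfl hadj.ne
        · rintro ⟨j, -, hj⟩
          exact absurd hj (by simp)
      | some j =>
        simp only [Set.mem_setOf_eq, Set.mem_image]
        constructor
        · rintro ⟨-, hcol⟩
          exact ⟨j, hcol, rfl⟩
        · rintro ⟨j', hj', hjj⟩
          obtain rfl : j' = j := Option.some_injective _ hjj
          refine ⟨?_, hj'⟩
          rw [wheel, SimpleGraph.fromRel_adj]
          exact ⟨by simp, Or.inl (Or.inl rfl)⟩
    rw [hSome, Set.ncard_image_of_injective _ (Option.some_injective _)] at hne ⊢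
    have key0 : {j : ZMod n | spokeN j.val = 0}.ncard = 3 := by
      have hseteq : {j : ZMod n | spokeN j.val = 0}
          = {((0 : ℕ) : ZMod n), ((2 : ℕ) : ZMod n), ((4 : ℕ) : ZMod n)} := by
        ext j
        simp only [Set.mem_setOf_eq, Set.mem_insert_iff, Set.mem_singleton_iff,
          spokeN_eq_zero, val_eq_iff n hn j 0 (by omega), val_eq_iff n hn j 2 (by omega),
          val_eq_iff n hn j 4 (by omega)]
      rw [hseteq]
      rw [Set.ncard_insert_of_notMem (by
          simp only [Set.mem_insert_iff, Set.mem_singleton_iff]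
          push_neg
          exact ⟨cast_ne_cast n hn 0 2 (by omega) (by omega) (by omega),
            cast_ne_cast n hn 0 4 (by omega) (by omega) (by omega)⟩)
        ((Set.finite_singleton _).insert _),
        Set.ncard_pair (cast_ne_cast n hn 2 4 (by omega) (by omega) (by omega))]
    have hi : i = 0 ∨ i = 1 ∨ i = 2 := by omega
    rcases hi with rfl | rfl | rfl
    · rw [key0]
      exact ⟨1, rfl⟩
    · have hcompl : {j : ZMod n | spokeN j.val = 1} = {j : ZMod n | spokeN j.val = 0}ᶜ := by
        ext j
        simp only [Set.mem_setOf_eq, Set.mem_compl_iff, spokeN_eq_one, spokeN_eq_zero]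
      have hadd := Set.ncard_add_ncard_compl {j : ZMod n | spokeN j.val = 0}
      rw [key0] at hadd
      have hcard : Nat.card (ZMod n) = n := by rw [Nat.card_eq_fintype_card, ZMod.card]
      rw [hcompl]
      have : ({j : ZMod n | spokeN j.val = 0}ᶜ).ncard = n - 3 := by omega
      rw [this]
      refine Nat.odd_iff.mpr ?_
      have := Nat.even_iff.mp heven
      omega
    · exfalso
      apply hne
      have : {j : ZMod n | spokeN j.val = (2 : Fin 3)} = ∅ := by
        ext j
        simp only [Set.mem_setOf_eq, Set.mem_empty_iff_false, iff_false]
        exact spokeN_ne_two j.val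
      rw [this, Set.ncard_empty]
  | some j =>
    have hne1 : (none : Option (ZMod n)) ≠ some (j + 1) := by simp
    have hne2 : (none : Option (ZMod n)) ≠ some (j - 1) := by simp
    have hne3 : some (j + 1) ≠ some (j - 1) := by
      intro h
      apply h2
      have hj : j + 1 = j - 1 := Option.some_injective _ h
      linear_combination hj
    have hsub : j - 1 + 1 = j := by ring
    have hset : {w | (wheel n).Adj (some j) w ∧ Sym2.lift ⟨wcol n, wcol_symm n hn⟩ s(some j, w) = i}
        = {w ∈ ({none, some (j + 1), some (j - 1)} : Set (Option (ZMod n))) |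
            (fun w => Sym2.lift ⟨wcol n, wcol_symm n hn⟩ s(some j, w)) w = i} := by
      ext w
      simp only [Set.mem_setOf_eq, Set.mem_insert_iff, Set.mem_singleton_iff, Set.sep_setOf]

      constructor
      · rintro ⟨hadj, hcol⟩
        refine ⟨?_, hcol⟩
        rw [wheel, SimpleGraph.fromRel_adj] at hadj
        obtain ⟨-, (h | ⟨i', hi1, hi2⟩) | (h | ⟨i', hi1, hi2⟩)⟩ := hadj
        · exact absurd h (by simp)
        · obtain rfl : j = i' := Option.some_injective _ hi1
          exact Or.inr (Or.inl hi2)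
        · exact Or.inl h
        · obtain rfl : j = i' + 1 := Option.some_injective _ hi2
          refine Or.inr (Or.inr ?_)
          rw [hi1]
          congr 1
          ring
      · rintro ⟨(rfl | rfl | rfl), hcol⟩
        · refine ⟨?_, hcol⟩
          rw [wheel, SimpleGraph.fromRel_adj]
          exact ⟨by simp, Or.inr (Or.inl rfl)⟩
        · refine ⟨?_, hcol⟩
          rw [wheel, SimpleGraph.fromRel_adj]
          refine ⟨?_, Or.inl (Or.inr ⟨j, rfl, rfl⟩)⟩
          intro h
          apply h1
          have := Option.some_injective _ h
          linear_combination -this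
        · refine ⟨?_, hcol⟩
          rw [wheel, SimpleGraph.fromRel_adj]
          refine ⟨?_, Or.inr (Or.inr ⟨j - 1, rfl, by rw [hsub]⟩)⟩
          intro h
          apply h1
          have := Option.some_injective _ h
          linear_combination this
    have hg1 : Sym2.lift ⟨wcol n, wcol_symm n hn⟩ s(some j, (none : Option (ZMod n)))
        = spokeN j.val := rfl
    have hg2 : Sym2.lift ⟨wcol n, wcol_symm n hn⟩ s(some j, some (j + 1)) = edgeN j.val := by
      show (if j + 1 = j + 1 then edgeN j.val
        else if j = j + 1 + 1 then edgeN (j + 1).val else 0) = edgeN j.val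
      rw [if_pos rfl]
    have hg3 : Sym2.lift ⟨wcol n, wcol_symm n hn⟩ s(some j, some (j - 1)) = edgeN (j - 1).val := by
      show (if j - 1 = j + 1 then edgeN j.val
        else if j = j - 1 + 1 then edgeN (j - 1).val else 0) = edgeN (j - 1).val
      rw [if_neg, if_pos hsub.symm]
      intro h
      exact h2 (by linear_combination -h)
    have hgood : Good ((fun w => Sym2.lift ⟨wcol n, wcol_symm n hn⟩ s(some j, w)) none)
        ((fun w => Sym2.lift ⟨wcol n, wcol_symm n hn⟩ s(some j, w)) (some (j + 1)))
        ((fun w => Sym2.lift ⟨wcol n, wcol_symm n hn⟩ s(some j, w)) (some (j - 1))) := by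
      simp only
      rw [hg1, hg2, hg3]
      exact good_zmod n hn heven j
    have hd := ncard_sep_triple none (some (j + 1)) (some (j - 1)) hne1 hne2 hne3
      (fun w => Sym2.lift ⟨wcol n, wcol_symm n hn⟩ s(some j, w)) i hgood
    rw [hset] at hne ⊢
    exact hd.resolve_left hne
end

section
/- Let G be a connected simple graph with a vertex w such that G − w is a forest. Then the edge set of G can be partitioned into two sets E_1, E_2 such that in the subgraph H_i induced by E_i (for i = 1, 2), every vertex of H_i other than w has odd degree. -/
/-!
Replace `w` by an arbitrary set of unconstrained vertices whose complement `U` induces a forest,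
and induct on `U`. A finite forest has a vertex `v` with at most one neighbour, so `v` has at most
one edge towards `U \ {v}`. Split the edges for `U \ {v}` by induction; then keep the colour of
that one edge and recolour the remaining edges at `v`, whose other endpoints are unconstrained.
This is always possible: if `deg v` is odd, give all its edges the colour of the kept edge;
if it is even and positive, give one edge a colour of its own and the others the other colour.
-/

open Set

section

variable {V : Type*}

def OddOrZeroAt (E : Set (Sym2 V)) (v : V) : Prop :=
  {e | e ∈ E ∧ v ∈ e}.ncard ≠ 0 → Odd {e | e ∈ E ∧ v ∈ e}.ncard

theorem oddOrZeroAt_congr {E E' : Set (Sym2 V)} {v : V} (h : ∀ e, v ∈ e → (e ∈ E ↔ e ∈ E')) :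
    OddOrZeroAt E v ↔ OddOrZeroAt E' v := by
  have : {e | e ∈ E ∧ v ∈ e} = {e | e ∈ E' ∧ v ∈ e} := by
    ext e
    exact ⟨fun ⟨he, hv⟩ => ⟨(h e hv).1 he, hv⟩, fun ⟨he, hv⟩ => ⟨(h e hv).2 he, hv⟩⟩
  simp only [OddOrZeroAt, this]

theorem Set.Finite.exists_split_odd_or_zero_of_mem {α : Type*} {I : Set α} (hI : I.Finite)
    {a : α} (ha : a ∈ I) :
    ∃ B ⊆ I, a ∈ B ∧ (B.ncard ≠ 0 → Odd B.ncard) ∧ ((I \ B).ncard ≠ 0 → Odd (I \ B).ncard) := by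
  rcases Nat.even_or_odd I.ncard with heven | hodd
  · refine ⟨{a}, singleton_subset_iff.2 ha, rfl, by simp, fun _ => ?_⟩
    rw [ncard_sdiff_singleton_of_mem ha]
    exact Nat.Even.sub_odd ((ncard_pos hI).2 ⟨a, ha⟩) heven odd_one
  · exact ⟨I, subset_rfl, ha, fun _ => hodd, by simp⟩

theorem Set.Finite.exists_split_odd_or_zero {α : Type*} {I P : Set α} (hI : I.Finite) (C : Set α)
    (hPI : P ⊆ I) (hP : P.Subsingleton) :
    ∃ B ⊆ I, B ∩ P = C ∩ P ∧
      (B.ncard ≠ 0 → Odd B.ncard) ∧ ((I \ B).ncard ≠ 0 → Odd (I \ B).ncard) := by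
  rcases I.eq_empty_or_nonempty with rfl | hne
  · exact ⟨∅, subset_rfl, by simp [subset_empty_iff.1 hPI], by simp, by simp⟩
  obtain ⟨a, haI, hPa⟩ : ∃ a ∈ I, P ⊆ {a} := by
    rcases P.eq_empty_or_nonempty with rfl | ⟨a, haP⟩
    · exact ⟨hne.some, hne.some_mem, empty_subset _⟩
    · exact ⟨a, hPI haP, fun x hx => hP hx haP⟩
  obtain ⟨B, hBI, haB, hB, hIB⟩ := hI.exists_split_odd_or_zero_of_mem haI
  rcases subset_singleton_iff_eq.1 hPa with rfl | rfl
  · exact ⟨B, hBI, by simp, hB, hIB⟩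
  by_cases haC : a ∈ C
  · exact ⟨B, hBI, by simp [haB, haC], hB, hIB⟩
  · refine ⟨I \ B, sdiff_subset, by simp [haB, haC], hIB, ?_⟩
    rwa [sdiff_sdiff_cancel_left hBI]

namespace SimpleGraph

theorem IsAcyclic.exists_neighborSet_subsingleton [Finite V] [Nonempty V] {G : SimpleGraph V}
    (hG : G.IsAcyclic) : ∃ v, (G.neighborSet v).Subsingleton := by
  obtain ⟨u, _, p, hp, hmax⟩ := Walk.exists_isPath_forall_isPath_length_le_length G
  have hsnd : ∀ x, G.Adj u x → x = p.snd := fun x hx =>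
    hG.eq_snd_of_adj_start hp hx <| by
      by_contra hxp
      simpa using hmax _ _ (p.cons hx.symm) (hp.cons hxp)
  exact ⟨u, fun x hx y hy => (hsnd x hx).trans (hsnd y hy).symm⟩

theorem exists_oddOrZeroAt_split_insert [Finite V] (G : SimpleGraph V) {U : Set V} {v : V}
    (hv : (G.neighborSet v ∩ U).Subsingleton) {E : Set (Sym2 V)} (hE : E ⊆ G.edgeSet)
    (hU : ∀ u ∈ U, OddOrZeroAt E u ∧ OddOrZeroAt (G.edgeSet \ E) u) :
    ∃ E' ⊆ G.edgeSet, ∀ u ∈ insert v U, OddOrZeroAt E' u ∧ OddOrZeroAt (G.edgeSet \ E') u := by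
  set I := G.incidenceSet v
  set P := (fun u => s(v, u)) '' (G.neighborSet v ∩ U)
  have hPI : P ⊆ I := by
    rintro _ ⟨u, hu, rfl⟩
    exact G.mk'_mem_incidenceSet_left_iff.2 hu.1
  obtain ⟨B, hBI, hBP, hB, hIB⟩ := (toFinite I).exists_split_odd_or_zero E hPI (hv.image _)
  refine ⟨(E \ I) ∪ B, union_subset (sdiff_subset.trans hE) (hBI.trans (G.incidenceSet_subset v)),
    fun u hu => ?_⟩
  obtain rfl | huv := eq_or_ne u v
  · have h₁ : {e | e ∈ (E \ I) ∪ B ∧ u ∈ e} = B := by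
      ext e
      exact ⟨fun ⟨he, hue⟩ => he.resolve_left fun he' => he'.2 ⟨hE he'.1, hue⟩,
        fun he => ⟨Or.inr he, (hBI he).2⟩⟩
    have h₂ : {e | e ∈ G.edgeSet \ ((E \ I) ∪ B) ∧ u ∈ e} = I \ B := by
      ext e
      simp only [mem_ofPred_eq, mem_sdiff, mem_union, not_or, not_and, not_not]
      exact ⟨fun ⟨⟨he, _, heB⟩, hue⟩ => ⟨⟨he, hue⟩, heB⟩,
        fun ⟨heI, heB⟩ => ⟨⟨heI.1, fun _ => heI, heB⟩, heI.2⟩⟩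
    simp only [OddOrZeroAt, h₁, h₂]
    exact ⟨hB, hIB⟩
  have huU : u ∈ U := hu.resolve_left huv
  -- the only edge at `u` that may have been recoloured is `s(v, u)`, which is pinned by `P`
  have hagree : ∀ e, u ∈ e → (e ∈ E ↔ e ∈ (E \ I) ∪ B) := by
    intro e hue
    by_cases heI : e ∈ I
    · obtain rfl : e = s(v, u) := (Sym2.mem_and_mem_iff huv.symm).1 ⟨heI.2, hue⟩
      have heP : s(v, u) ∈ P := ⟨u, ⟨G.mem_edgeSet.1 heI.1, huU⟩, rfl⟩
      have := congrArg (s(v, u) ∈ ·) hBP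
      simp only [mem_inter_iff, heP, and_true, eq_iff_iff] at this
      simp [heI, this]
    · have heB : e ∉ B := fun h => heI (hBI h)
      simp [heI, heB]
  exact ⟨(oddOrZeroAt_congr hagree).1 (hU u huU).1,
    (oddOrZeroAt_congr fun e hue => by simp only [mem_sdiff, hagree e hue]).1 (hU u huU).2⟩

theorem exists_oddOrZeroAt_split_of_isAcyclic [Finite V] (G : SimpleGraph V) (U : Set V)
    (hU : (G.induce U).IsAcyclic) :
    ∃ E ⊆ G.edgeSet, ∀ u ∈ U, OddOrZeroAt E u ∧ OddOrZeroAt (G.edgeSet \ E) u := by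
  induction h : U.ncard generalizing U with
  | zero =>
    obtain rfl : U = ∅ := (ncard_eq_zero (toFinite U)).1 h
    exact ⟨∅, empty_subset _, by simp⟩
  | succ n ih =>
    have : Nonempty U := (nonempty_of_ncard_ne_zero (h ▸ n.succ_ne_zero)).to_subtype
    obtain ⟨⟨v, hvU⟩, hv⟩ := hU.exists_neighborSet_subsingleton
    have hv' : (G.neighborSet v ∩ (U \ {v})).Subsingleton := fun x hx y hy =>
      congrArg Subtype.val (hv (x := ⟨x, hx.2.1⟩) hx.1 (y := ⟨y, hy.2.1⟩) hy.1)
    obtain ⟨E, hE, hgood⟩ := ih (U \ {v}) (hU.embedding (G.induceHomOfLE sdiff_subset))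
      (by rw [ncard_sdiff_singleton_of_mem hvU, h, Nat.add_sub_cancel])
    obtain ⟨E', hE', hgood'⟩ := G.exists_oddOrZeroAt_split_insert hv' hE hgood
    rw [insert_sdiff_singleton, insert_eq_of_mem hvU] at hgood'
    exact ⟨E', hE', hgood'⟩

end SimpleGraph

end

theorem stmt14_general {V : Type*} [Fintype V] (G : SimpleGraph V) (w : V)
    (hforest : (G.induce {v : V | v ≠ w}).IsAcyclic) :
    ∃ E₁ E₂ : Set (Sym2 V), E₁ ∪ E₂ = G.edgeSet ∧ Disjoint E₁ E₂ ∧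
      (∀ v : V, v ≠ w → {e : Sym2 V | e ∈ E₁ ∧ v ∈ e}.ncard ≠ 0 →
        Odd {e : Sym2 V | e ∈ E₁ ∧ v ∈ e}.ncard) ∧
      (∀ v : V, v ≠ w → {e : Sym2 V | e ∈ E₂ ∧ v ∈ e}.ncard ≠ 0 →
        Odd {e : Sym2 V | e ∈ E₂ ∧ v ∈ e}.ncard) := by
  obtain ⟨E, hE, hodd⟩ := G.exists_oddOrZeroAt_split_of_isAcyclic _ hforest
  exact ⟨E, G.edgeSet \ E, union_sdiff_cancel hE, disjoint_sdiff_right,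
    fun v hv => (hodd v hv).1, fun v hv => (hodd v hv).2⟩

/-- Let `G` be a connected graph with a vertex `w` such that `G - w` is a forest.  Then
`E(G)` can be partitioned into two sets `E₁, E₂` such that, in the subgraph spanned by
each `Eᵢ`, every vertex other than `w` that is incident to an edge of `Eᵢ` has odd
degree. -/
theorem stmt14 {V : Type*} [Fintype V] (G : SimpleGraph V)
    (hconn : G.Connected) (w : V)
    (hforest : (G.induce {v : V | v ≠ w}).IsAcyclic) :
    ∃ E₁ E₂ : Set (Sym2 V), E₁ ∪ E₂ = G.edgeSet ∧ Disjoint E₁ E₂ ∧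
      (∀ v : V, v ≠ w → {e : Sym2 V | e ∈ E₁ ∧ v ∈ e}.ncard ≠ 0 →
        Odd {e : Sym2 V | e ∈ E₁ ∧ v ∈ e}.ncard) ∧
      (∀ v : V, v ≠ w → {e : Sym2 V | e ∈ E₂ ∧ v ∈ e}.ncard ≠ 0 →
        Odd {e : Sym2 V | e ∈ E₂ ∧ v ∈ e}.ncard) :=
  stmt14_general G w hforest
end

section
/- Let G be a connected simple graph of even order, and let w be a vertex of odd degree such that G − w is connected. Then G has an odd factor F such that G − E(F) is a forest and F contains every edge incident to w. -/
/-!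
Choose a spanning tree `T` of `G` in which `w` is a leaf: a spanning tree of `G - w` together
with one edge `wu`. Over `ZMod 2`, every vertex function with zero total is the degree-parity
vector of an edge set of a connected graph (add up walks from each vertex to a fixed root).
Applied in `T` to `v ↦ 1 + deg_B v`, where `B = E(G) \ E(T)` and the total is `|V| = 0` by
the handshake lemma, this gives `S ⊆ E(T)` such that `F = B ∪ S` is an odd factor, and
`G - E(F) ⊆ T` is a forest. Every edge at `w` other than `wu` lies in `B ⊆ F`; as `deg_G w`
and `deg_F w` are both odd, `wu ∈ F` as well.
-/

open SimpleGraph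

noncomputable def edgeDegree {V : Type*} (F : Set (Sym2 V)) (v : V) : ℕ :=
  {e | e ∈ F ∧ v ∈ e}.ncard

theorem edgeDegree_union {V : Type*} [Finite V] {F F' : Set (Sym2 V)} (h : Disjoint F F')
    (v : V) : edgeDegree (F ∪ F') v = edgeDegree F v + edgeDegree F' v := by
  simp only [edgeDegree]
  rw [← Set.ncard_union_eq]
  · congr 1
    ext e
    simp only [Set.mem_ofPred_eq, Set.mem_union]
    tauto
  · exact h.mono (fun e he => he.1) (fun e he => he.1)

namespace SimpleGraph

open Finset Matrix

variable {V : Type*} {G : SimpleGraph V}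

theorem incMatrix_col_of_adj [DecidableEq V] [DecidableRel G.Adj] (R : Type*) [NonAssocSemiring R]
    {a b : V} (h : G.Adj a b) : (G.incMatrix R).col s(a, b) = Pi.single a 1 + Pi.single b 1 := by
  ext x
  rcases eq_or_ne x a with rfl | hxa
  · simp [incMatrix_apply', h, h.ne]
  · rcases eq_or_ne x b with rfl | hxb
    · simp [incMatrix_apply', mk'_mem_incidenceSet_iff, h, hxa]
    · simp [incMatrix_apply', mk'_mem_incidenceSet_iff, hxa, hxb]

theorem exists_isTree_le_of_adj {w u : V} (hGw : (G.induce {v | v ≠ w}).Connected)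
    (hwu : G.Adj w u) : ∃ T ≤ G, T.IsTree ∧ ∀ x, T.Adj w x → x = u := by
  obtain ⟨A, hAG, hA, hAreach⟩ := (G.deleteIncidenceSet w).exists_isAcyclic_reachable_eq_le
  have hAw (x : V) : ¬A.Adj w x := fun h => (deleteIncidenceSet_adj.mp (hAG h)).2.1 rfl
  have hAwu : ¬A.Reachable w u := by
    rintro ⟨p⟩
    cases p with
    | nil => exact hwu.ne rfl
    | cons h _ => exact hAw _ h
  have hAu (v : V) (hv : v ≠ w) : A.Reachable v u := by
    let φ : G.induce {v | v ≠ w} →g G.deleteIncidenceSet w :=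
      ⟨Subtype.val, fun {a b} h => deleteIncidenceSet_adj.mpr ⟨h, a.2, b.2⟩⟩
    rw [hAreach]
    exact (hGw.preconnected ⟨v, hv⟩ ⟨u, hwu.ne'⟩).map φ
  have hTwu : (A ⊔ edge w u).Adj w u := Or.inr (by simp [edge_adj, hwu.ne])
  refine ⟨A ⊔ edge w u, sup_le (hAG.trans (G.deleteIncidenceSet_le w)) ?_,
    ⟨?_, hA.sup_edge_of_not_reachable hAwu⟩, fun x hx => ?_⟩
  · intro a b hab
    rcases (edge_adj _ _ _ _).mp hab with ⟨⟨rfl, rfl⟩ | ⟨rfl, rfl⟩, -⟩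
    exacts [hwu, hwu.symm]
  · refine (connected_iff_exists_forall_reachable _).mpr ⟨u, fun v => ?_⟩
    rcases eq_or_ne v w with rfl | hv
    · exact hTwu.reachable.symm
    · exact ((hAu v hv).mono le_sup_left).symm
  · rcases hx with h | h
    · exact absurd h (hAw x)
    · simp only [edge_adj] at h
      grind

theorem mem_of_odd_edgeDegree {F : Set (Sym2 V)} {w : V} {e₀ : Sym2 V} (hFG : F ⊆ G.edgeSet)
    (hG : Odd (G.neighborSet w).ncard) (hF : Odd (edgeDegree F w))
    (he₀ : e₀ ∈ G.incidenceSet w) (hsub : G.incidenceSet w \ {e₀} ⊆ F) : e₀ ∈ F := by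
  classical
  by_contra h
  have hFw : {e | e ∈ F ∧ w ∈ e} = G.incidenceSet w \ {e₀} := by
    ext e
    exact ⟨fun ⟨heF, hwe⟩ => ⟨⟨hFG heF, hwe⟩, fun he => h (he ▸ heF)⟩,
      fun he => ⟨hsub he, he.1.2⟩⟩
  have hinc : (G.incidenceSet w).ncard = (G.neighborSet w).ncard :=
    Nat.card_congr (G.incidenceSetEquivNeighborSet w)
  rw [edgeDegree, hFw, Set.ncard_sdiff_singleton_of_mem he₀, hinc] at hF
  exact Nat.not_even_iff_odd.mpr hF (Nat.Odd.sub_odd hG odd_one)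

variable [Fintype V]

section IncMatrix

variable [DecidableEq V] [DecidableRel G.Adj]

def Walk.edgeParity {u v : V} (p : G.Walk u v) (e : Sym2 V) : ZMod 2 := p.edges.count e

theorem Walk.incMatrix_mulVec_edgeParity {u v : V} (p : G.Walk u v) :
    G.incMatrix (ZMod 2) *ᵥ p.edgeParity = Pi.single u 1 + Pi.single v 1 := by
  induction p with
  | @nil x =>
    have : (nil : G.Walk x x).edgeParity = 0 := by ext; simp [edgeParity]
    rw [this, mulVec_zero, ZModModule.add_self]
  | @cons a b c h p ih =>
    have hcons : (cons h p).edgeParity = Pi.single s(a, b) 1 + p.edgeParity := by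
      ext e
      simp only [edgeParity, edges_cons, List.count_cons, Pi.add_apply, Pi.single_apply]
      split_ifs <;> simp_all [add_comm]
    rw [hcons, mulVec_add, ih, mulVec_single_one, incMatrix_col_of_adj _ h,
      ZModModule.add_add_add_cancel]

theorem Connected.exists_incMatrix_mulVec_eq (hG : G.Connected) {p : V → ZMod 2}
    (hp : ∑ v, p v = 0) : ∃ f, G.incMatrix (ZMod 2) *ᵥ f = p := by
  obtain ⟨r⟩ := hG.nonempty
  let P v : G.Walk v r := (hG.preconnected v r).some
  refine ⟨∑ v, p v • (P v).edgeParity, ?_⟩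
  simp only [mulVec_sum, mulVec_smul, Walk.incMatrix_mulVec_edgeParity, smul_add,
    sum_add_distrib, ← sum_smul, hp, zero_smul, add_zero]
  ext x
  simp [Finset.sum_apply, Pi.single_apply]

theorem cast_edgeDegree_eq_incMatrix_mulVec (f : Sym2 V → ZMod 2) (v : V) :
    (edgeDegree {e | e ∈ G.edgeSet ∧ f e = 1} v : ZMod 2) =
      (G.incMatrix (ZMod 2) *ᵥ f) v := by
  classical
  have hf (e : Sym2 V) : G.incMatrix (ZMod 2) v e * f e =
      if e ∈ G.incidenceSet v ∧ f e = 1 then 1 else 0 := by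
    by_cases he : e ∈ G.incidenceSet v
    · rw [G.incMatrix_of_mem_incidenceSet he, one_mul, if_congr (and_iff_right he) rfl rfl]
      generalize f e = a
      revert a; decide
    · rw [G.incMatrix_of_notMem_incidenceSet he, zero_mul, if_neg (he ·.1)]
  have hset : {e | e ∈ {e | e ∈ G.edgeSet ∧ f e = 1} ∧ v ∈ e} =
      {e | e ∈ G.incidenceSet v ∧ f e = 1} := by
    ext e
    simp only [incidenceSet, Set.mem_ofPred_eq]
    tauto
  simp only [mulVec, dotProduct, hf, sum_boole, edgeDegree, hset, Set.ncard_eq_toFinset_card',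
    Set.toFinset_ofPred]

theorem sum_incMatrix_mulVec_eq_zero (f : Sym2 V → ZMod 2) :
    ∑ v, (G.incMatrix (ZMod 2) *ᵥ f) v = 0 := by
  simp only [mulVec, dotProduct]
  rw [sum_comm]
  refine sum_eq_zero fun e _ => ?_
  rw [← sum_mul]
  by_cases he : e ∈ G.edgeSet
  · rw [G.sum_incMatrix_apply_of_mem_edgeSet he]
    exact zero_mul _
  · rw [G.sum_incMatrix_apply_of_notMem_edgeSet he, zero_mul]

end IncMatrix

theorem Connected.exists_subset_edgeSet_cast_edgeDegree_eq (hG : G.Connected) {p : V → ZMod 2}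
    (hp : ∑ v, p v = 0) : ∃ S ⊆ G.edgeSet, ∀ v, (edgeDegree S v : ZMod 2) = p v := by
  classical
  obtain ⟨f, hf⟩ := hG.exists_incMatrix_mulVec_eq hp
  exact ⟨{e | e ∈ G.edgeSet ∧ f e = 1}, fun e he => he.1,
    fun v => by rw [cast_edgeDegree_eq_incMatrix_mulVec, hf]⟩

theorem sum_cast_edgeDegree_eq_zero {S : Set (Sym2 V)} (hS : S ⊆ G.edgeSet) :
    ∑ v, (edgeDegree S v : ZMod 2) = 0 := by
  classical
  have hS' : {e | e ∈ G.edgeSet ∧ (if e ∈ S then 1 else 0 : ZMod 2) = 1} = S := by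
    ext e
    by_cases he : e ∈ S
    · simp [he, hS he]
    · simp [he]
  calc ∑ v, (edgeDegree S v : ZMod 2)
      = ∑ v, (G.incMatrix (ZMod 2) *ᵥ fun e => if e ∈ S then 1 else 0) v := by
        simp_rw [← cast_edgeDegree_eq_incMatrix_mulVec, hS']
    _ = 0 := G.sum_incMatrix_mulVec_eq_zero _

theorem Connected.exists_odd_edgeDegree_of_le {T : SimpleGraph V} (hT : T.Connected)
    (hTG : T ≤ G) (hV : Even (Fintype.card V)) :
    ∃ F ⊆ G.edgeSet, (∀ v, Odd (edgeDegree F v)) ∧ G.edgeSet \ T.edgeSet ⊆ F := by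
  set B := G.edgeSet \ T.edgeSet
  have hp : ∑ v, (1 + edgeDegree B v : ZMod 2) = 0 := by
    rw [sum_add_distrib, sum_cast_edgeDegree_eq_zero Set.sdiff_subset, sum_const, card_univ,
      nsmul_one, ZMod.natCast_eq_zero_iff_even.mpr hV, add_zero]
  obtain ⟨S, hST, hS⟩ := hT.exists_subset_edgeSet_cast_edgeDegree_eq hp
  have hBS : Disjoint B S := Set.disjoint_sdiff_left.mono_right hST
  refine ⟨B ∪ S, Set.union_subset Set.sdiff_subset (hST.trans (edgeSet_mono hTG)), fun v => ?_,
    Set.subset_union_left⟩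
  rw [← ZMod.natCast_eq_one_iff_odd, edgeDegree_union hBS, Nat.cast_add, hS, ← add_assoc,
    add_comm _ 1, add_assoc, ZModModule.add_self, add_zero]

end SimpleGraph

theorem stmt15_general {V : Type*} [Fintype V] (G : SimpleGraph V)
    (heven : Even (Fintype.card V))
    (w : V) (hw : Odd (G.neighborSet w).ncard)
    (hGw : (G.induce {v : V | v ≠ w}).Connected) :
    ∃ F ⊆ G.edgeSet,
      (∀ v : V, Odd {e : Sym2 V | e ∈ F ∧ v ∈ e}.ncard) ∧
      (SimpleGraph.fromEdgeSet (G.edgeSet \ F)).IsAcyclic ∧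
      (∀ e ∈ G.edgeSet, w ∈ e → e ∈ F) := by
  obtain ⟨u, hwu⟩ : (G.neighborSet w).Nonempty := Set.nonempty_of_ncard_ne_zero hw.pos.ne'
  obtain ⟨T, hTG, hT, hTw⟩ := exists_isTree_le_of_adj hGw hwu
  obtain ⟨F, hFG, hF, hTF⟩ := hT.connected.exists_odd_edgeDegree_of_le hTG heven
  have hwF : ∀ e ∈ G.incidenceSet w, e ≠ s(w, u) → e ∈ F := by
    rintro e ⟨heG, hwe⟩ hne
    refine hTF ⟨heG, fun heT => hne ?_⟩
    obtain ⟨x, rfl⟩ := Sym2.mem_iff_exists.mp hwe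
    rw [hTw x heT]
  refine ⟨F, hFG, hF, hT.isAcyclic.anti ((fromEdgeSet_le T).mpr ?_), fun e he hwe => ?_⟩
  · exact fun e ⟨⟨heG, heF⟩, _⟩ => by_contra fun heT => heF (hTF ⟨heG, heT⟩)
  · by_cases hne : e = s(w, u)
    · exact hne ▸ mem_of_odd_edgeDegree hFG hw (hF w) ⟨hwu, Sym2.mem_mk_left w u⟩
        fun e he => hwF e he.1 he.2
    · exact hwF e ⟨he, hwe⟩ hne

/-- Let `G` be a connected graph of even order and `w` a vertex of odd degree such that
`G - w` is connected.  Then `G` has an odd factor `F` (every vertex has odd `F`-degree)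
such that `G - E(F)` is a forest and `F` contains every edge incident to `w`. -/
theorem stmt15 {V : Type*} [Fintype V] (G : SimpleGraph V)
    (hconn : G.Connected) (heven : Even (Fintype.card V))
    (w : V) (hw : Odd (G.neighborSet w).ncard)
    (hGw : (G.induce {v : V | v ≠ w}).Connected) :
    ∃ F ⊆ G.edgeSet,
      (∀ v : V, Odd {e : Sym2 V | e ∈ F ∧ v ∈ e}.ncard) ∧
      (SimpleGraph.fromEdgeSet (G.edgeSet \ F)).IsAcyclic ∧
      (∀ e ∈ G.edgeSet, w ∈ e → e ∈ F) :=
  stmt15_general G heven w hw hGw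
end

section
/- Let G be a 3-connected simple graph and let w, u be two nonadjacent vertices of G. Then there exists a chordless path P in G connecting w and u such that G − V(P) is connected. -/
/-!
Choose a chordless `w`–`u` path `P` and a vertex `c₀ ∉ P` such that the component `C` of `c₀`
in `G - V(P)` is as large as possible. If a neighbour `z ∉ C` of `C` (an attachment; it lies on
`P`) did not separate `w` from `u` in `G - C - z`, a chordless `w`–`u` path in `G - C - z` would
leave `C ∪ {z}` connected, contradicting maximality. So every attachment `f` is a separator; let
`X f` and `Y f` be the vertex sets of the components of `w` and `u` in `G - C - f`. As `f` moves
along `P` from `w` to `u`, `X f` grows and `Y f` shrinks. If some `r` lay outside `P ∪ C`, pick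
separators `g` with `r ∈ Y g` and `|X g|` maximal and `h` with `r ∈ X h` and `|Y h|` maximal.
Then `Y g ∩ X h` contains `r` but no attachment of `C`, so `{g, h}` separates `r` from `C`,
contradicting 3-connectivity.
-/

/-- `G` is `k`-connected: it has more than `k` vertices and remains connected
after deleting any set of fewer than `k` vertices. -/
def IsKConnected {V : Type*} [Fintype V] (G : SimpleGraph V) (k : ℕ) : Prop :=
  k < Fintype.card V ∧ ∀ s : Set V, s.ncard < k → (G.induce sᶜ).Connected

lemma exists_max_of_bounded {α : Type*} {p : α → Prop} (f : α → ℕ) {N : ℕ}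
    (hp : ∃ a, p a) (hN : ∀ a, p a → f a ≤ N) : ∃ a, p a ∧ ∀ b, p b → f b ≤ f a := by
  classical
  obtain ⟨a, hpa⟩ := hp
  obtain ⟨b, hpb, hb⟩ := Nat.findGreatest_spec (P := fun n => ∃ a, p a ∧ f a = n)
    (hN a hpa) ⟨a, hpa, rfl⟩
  exact ⟨b, hpb, fun c hc => hb ▸ Nat.le_findGreatest (hN c hc) ⟨c, hc, rfl⟩⟩

namespace SimpleGraph

variable {V : Type*} {G : SimpleGraph V}

namespace Walk

lemma edges_eq_of_length_eq_one {u v : V} {p : G.Walk u v} (h : p.length = 1) :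
    p.edges = [s(u, v)] := by
  cases p with
  | nil => simp at h
  | cons _ q => cases q with
    | nil => rfl
    | cons _ _ => simp at h

lemma isChordless_of_length_eq_dist {u v : V} {p : G.Walk u v} (hp : p.length = G.dist u v) :
    p.IsChordless := by
  classical
  have edge_mem {a b : V} (q : G.Walk a b) (hq : q.IsSubwalk p) (hab : G.Adj a b) :
      s(a, b) ∈ p.edges := by
    have : q.length = 1 := (length_eq_dist_of_subwalk hp hq).trans (dist_eq_one_iff_adj.2 hab)
    exact hq.edges_subset (by simp [edges_eq_of_length_eq_one this])
  rw [isChordless_iff_forall_mem_edges]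
  intro x y hx hy hxy
  rw [← p.take_spec hx, mem_support_append_iff] at hy
  rcases hy with hy | hy
  · rw [Sym2.eq_swap]
    exact edge_mem _ ((isSubwalk_dropUntil _ hy).trans (isSubwalk_takeUntil _ hx)) hxy.symm
  · exact edge_mem _ ((isSubwalk_takeUntil _ hy).trans (isSubwalk_dropUntil _ hx)) hxy

lemma IsChordless.map_embedding {V' : Type*} {G' : SimpleGraph V'} (f : G ↪g G') {u v : V}
    {p : G.Walk u v} (hp : p.IsChordless) : (p.map f.toHom).IsChordless := by
  rw [isChordless_iff_forall_mem_edges] at hp ⊢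
  simp only [support_map, edges_map, List.mem_map]
  rintro _ _ ⟨x, hx, rfl⟩ ⟨y, hy, rfl⟩ hxy
  exact ⟨s(x, y), hp hx hy (f.map_adj_iff.1 hxy), rfl⟩

lemma IsPath.notMem_takeUntil_or_notMem_dropUntil [DecidableEq V] {u v t f : V}
    {p : G.Walk u v} (hp : p.IsPath) (ht : t ∈ p.support) (hft : f ≠ t) :
    f ∉ (p.takeUntil t ht).support ∨ f ∉ (p.dropUntil t ht).support := by
  by_contra! h
  have hnd := hp.support_nodup
  rw [← p.take_spec ht, support_append] at hnd
  have hf : f ∈ (p.dropUntil t ht).support.tail := by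
    have := h.2
    rw [← cons_tail_support, List.mem_cons] at this
    exact this.resolve_left hft
  exact (List.nodup_append.1 hnd).2.2 f h.1 f hf rfl

end Walk

def ReachableIn (G : SimpleGraph V) (S : Set V) (a b : V) : Prop :=
  ∃ p : G.Walk a b, ∀ x ∈ p.support, x ∈ S

/-- The vertex set of the component of `a` in `G[S]`; empty when `a ∉ S`. -/
def componentIn (G : SimpleGraph V) (S : Set V) (a : V) : Set V :=
  {b | G.ReachableIn S a b}

namespace ReachableIn

variable {S : Set V} {a b c : V}

lemma refl (ha : a ∈ S) : G.ReachableIn S a a :=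
  ⟨.nil, by simpa using ha⟩

lemma symm (h : G.ReachableIn S a b) : G.ReachableIn S b a := by
  obtain ⟨p, hp⟩ := h
  exact ⟨p.reverse, by simpa using hp⟩

lemma trans (h : G.ReachableIn S a b) (h' : G.ReachableIn S b c) : G.ReachableIn S a c := by
  obtain ⟨p, hp⟩ := h
  obtain ⟨q, hq⟩ := h'
  exact ⟨p.append q, by simpa [or_imp, forall_and] using And.intro hp hq⟩

lemma mono {T : Set V} (hST : S ⊆ T) (h : G.ReachableIn S a b) : G.ReachableIn T a b := by
  obtain ⟨p, hp⟩ := h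
  exact ⟨p, fun x hx => hST (hp x hx)⟩

lemma mem_left (h : G.ReachableIn S a b) : a ∈ S := by
  obtain ⟨p, hp⟩ := h
  exact hp a p.start_mem_support

lemma mem_right (h : G.ReachableIn S a b) : b ∈ S :=
  h.symm.mem_left

lemma of_adj (hab : G.Adj a b) (ha : a ∈ S) (hb : b ∈ S) : G.ReachableIn S a b :=
  ⟨hab.toWalk, by simp [ha, hb]⟩

lemma mem_of_forall_adj {T : Set V} (h : G.ReachableIn S a b) (ha : a ∈ T)
    (hT : ∀ x ∈ T, ∀ y ∈ S, G.Adj x y → y ∈ T) : b ∈ T := by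
  obtain ⟨p, hp⟩ := h
  induction p with
  | nil => exact ha
  | cons hxy q ih =>
    simp only [Walk.support_cons, List.mem_cons, forall_eq_or_imp] at hp
    exact ih (hT _ ha _ (hp.2 _ q.start_mem_support) hxy) hp.2

lemma of_induce_reachable {a b : S} (h : (G.induce S).Reachable a b) : G.ReachableIn S a b := by
  obtain ⟨p⟩ := h
  refine ⟨p.map (Embedding.induce S).toHom, fun x hx => ?_⟩
  obtain ⟨y, -, rfl⟩ := List.mem_map.1 ((Walk.support_map _ _) ▸ hx)
  exact y.2

lemma induce_reachable (h : G.ReachableIn S a b) :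
    (G.induce S).Reachable ⟨a, h.mem_left⟩ ⟨b, h.mem_right⟩ := by
  obtain ⟨p, hp⟩ := h
  exact ⟨p.induce S hp⟩

lemma exists_isChordless_isPath (h : G.ReachableIn S a b) :
    ∃ p : G.Walk a b, p.IsPath ∧ p.IsChordless ∧ ∀ x ∈ p.support, x ∈ S := by
  obtain ⟨q, hq, hlen⟩ := h.induce_reachable.exists_path_of_dist
  refine ⟨q.map (Embedding.induce S).toHom,
    (Walk.isPath_map_iff_of_injective (Embedding.induce (G := G) S).injective).2 hq,
    (Walk.isChordless_of_length_eq_dist hlen).map_embedding _, fun x hx => ?_⟩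
  obtain ⟨y, -, rfl⟩ := List.mem_map.1 ((Walk.support_map _ _) ▸ hx)
  exact y.2

lemma reachableIn_componentIn (h : G.ReachableIn S a b) :
    G.ReachableIn (G.componentIn S a) a b := by
  classical
  obtain ⟨p, hp⟩ := h
  exact ⟨p, fun x hx =>
    ⟨p.takeUntil x hx, fun y hy => hp y (p.support_takeUntil_subset_support hx hy)⟩⟩

end ReachableIn

lemma mem_componentIn_of_adj {S : Set V} {a b c : V} (hb : b ∈ G.componentIn S a)
    (hbc : G.Adj b c) (hc : c ∈ S) : c ∈ G.componentIn S a :=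
  hb.trans (.of_adj hbc hb.mem_right hc)

lemma induce_connected_of_forall_reachableIn {S : Set V} {a : V} (ha : a ∈ S)
    (h : ∀ b ∈ S, G.ReachableIn S a b) : (G.induce S).Connected := by
  have : Nonempty S := ⟨⟨a, ha⟩⟩
  refine (connected_iff _).2 ⟨fun x y => ?_, this⟩
  exact (h x x.2).induce_reachable.symm.trans (h y y.2).induce_reachable

end SimpleGraph

open SimpleGraph

section

variable {V : Type*} [Fintype V] {G : SimpleGraph V}

lemma IsKConnected.anti {k l : ℕ} (h : IsKConnected G k) (hlk : l ≤ k) : IsKConnected G l :=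
  ⟨hlk.trans_lt h.1, fun s hs => h.2 s (hs.trans_le hlk)⟩

lemma IsKConnected.reachableIn {k : ℕ} (h : IsKConnected G k) {s : Set V} (hs : s.ncard < k)
    {a b : V} (ha : a ∉ s) (hb : b ∉ s) : G.ReachableIn sᶜ a b :=
  ReachableIn.of_induce_reachable ((h.2 s hs).preconnected ⟨a, ha⟩ ⟨b, hb⟩)

end

namespace SimpleGraph

variable {V : Type*} {G : SimpleGraph V}

lemma exists_isChordless_isPath_max_componentIn [Fintype V] (hG : IsKConnected G 3) (w u : V) :
    ∃ (P : G.Walk w u) (c₀ : V), (P.IsPath ∧ P.IsChordless ∧ c₀ ∉ P.support) ∧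
      ∀ (Q : G.Walk w u) (d : V), Q.IsPath → Q.IsChordless → d ∉ Q.support →
        (G.componentIn {x | x ∉ Q.support} d).ncard ≤
          (G.componentIn {x | x ∉ P.support} c₀).ncard := by
  classical
  obtain ⟨v₀, -, hv₀⟩ := Finset.exists_mem_notMem_of_card_lt_card (s := {w, u})
    (t := Finset.univ) ((Finset.card_le_two).trans_lt (by simpa using hG.1.trans' (by norm_num)))
  simp only [Finset.mem_insert, Finset.mem_singleton, not_or] at hv₀
  obtain ⟨P, hP, hPc, hPv₀⟩ := (hG.reachableIn (s := {v₀}) (by simp)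
    (fun h => hv₀.1 (Set.mem_singleton_iff.1 h).symm)
    (fun h => hv₀.2 (Set.mem_singleton_iff.1 h).symm)).exists_isChordless_isPath
  obtain ⟨⟨P, c₀⟩, hP, hmax⟩ := exists_max_of_bounded
    (p := fun x : G.Walk w u × V => x.1.IsPath ∧ x.1.IsChordless ∧ x.2 ∉ x.1.support)
    (fun x => (G.componentIn {y | y ∉ x.1.support} x.2).ncard) (N := Fintype.card V)
    ⟨⟨P, v₀⟩, hP, hPc, fun h => hPv₀ v₀ h rfl⟩
    (fun _ _ => (Set.ncard_le_ncard (Set.subset_univ _)).trans (by simp))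
  exact ⟨P, c₀, hP, fun Q d hQ hQc hd => hmax ⟨Q, d⟩ ⟨hQ, hQc, hd⟩⟩

variable {w u : V} {P : G.Walk w u} {C : Set V}

lemma not_reachableIn_of_max_componentIn [Finite V] {c₀ : V}
    (hmax : ∀ (Q : G.Walk w u) (d : V), Q.IsPath → Q.IsChordless → d ∉ Q.support →
        (G.componentIn {x | x ∉ Q.support} d).ncard ≤
          (G.componentIn {x | x ∉ P.support} c₀).ncard)
    {c z : V} (hc : c ∈ G.componentIn {x | x ∉ P.support} c₀)
    (hz : z ∉ G.componentIn {x | x ∉ P.support} c₀) (hcz : G.Adj c z) :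
    ¬G.ReachableIn (insert z (G.componentIn {x | x ∉ P.support} c₀))ᶜ w u := by
  set C := G.componentIn {x | x ∉ P.support} c₀
  intro hwu
  obtain ⟨Q, hQ, hQc, hQS⟩ := hwu.exists_isChordless_isPath
  have hQ' : ∀ x ∈ insert z C, x ∉ Q.support := fun x hx hxQ => hQS x hxQ hx
  have hCQ : C ⊆ G.componentIn {x | x ∉ Q.support} c₀ := fun x hx =>
    hx.reachableIn_componentIn.mono fun y hy => hQ' y (Or.inr hy)
  have hsub : insert z C ⊆ G.componentIn {x | x ∉ Q.support} c₀ :=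
    Set.insert_subset (mem_componentIn_of_adj (hCQ hc) hcz (hQ' z (Or.inl rfl))) hCQ
  have hle := Set.ncard_le_ncard hsub (Set.toFinite _)
  rw [Set.ncard_insert_of_notMem hz (Set.toFinite _)] at hle
  have := hmax Q c₀ hQ hQc (hQ' c₀ (Or.inr (ReachableIn.refl hc.mem_left)))
  omega

lemma reachableIn_of_walk (hCP : ∀ x ∈ P.support, x ∉ C) {a b f : V} (q : G.Walk a b)
    (hq : ∀ x ∈ q.support, x ∈ P.support) (hf : f ∉ q.support) :
    G.ReachableIn (insert f C)ᶜ a b :=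
  ⟨q, fun x hx => by
    simpa [not_or] using And.intro (ne_of_mem_of_not_mem hx hf) (hCP x (hq x hx))⟩

lemma mem_support_of_not_reachableIn (hCP : ∀ x ∈ P.support, x ∉ C) {f : V}
    (hf : ¬G.ReachableIn (insert f C)ᶜ w u) : f ∈ P.support := by
  by_contra hfP
  exact hf (reachableIn_of_walk hCP P (fun _ => id) hfP)

lemma mem_componentIn_union_of_mem_support (hP : P.IsPath) (hCP : ∀ x ∈ P.support, x ∉ C)
    {t f : V} (ht : t ∈ P.support) (hft : f ≠ t) :
    t ∈ G.componentIn (insert f C)ᶜ w ∪ G.componentIn (insert f C)ᶜ u := by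
  classical
  rcases hP.notMem_takeUntil_or_notMem_dropUntil ht hft with hf | hf
  · exact Or.inl <| reachableIn_of_walk hCP _
      (fun _ hx => P.support_takeUntil_subset_support ht hx) hf
  · exact Or.inr (ReachableIn.symm <| reachableIn_of_walk hCP _
      (fun _ hx => P.support_dropUntil_subset_support ht hx) hf)

lemma mem_componentIn_union_of_isKConnected [Fintype V] (hG : IsKConnected G 2) (hP : P.IsPath)
    (hCP : ∀ x ∈ P.support, x ∉ C) (hattach : ∀ c ∈ C, ∀ z ∉ C, G.Adj c z → z ∈ P.support)
    {c₀ : V} (hc₀ : c₀ ∈ C) {f v : V} (hf : f ∉ C) (hv : v ∉ insert f C) :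
    v ∈ G.componentIn (insert f C)ᶜ w ∪ G.componentIn (insert f C)ᶜ u := by
  by_contra hvXY
  set S := (insert f C)ᶜ
  have hvf : v ∉ ({f} : Set V) := fun h => hv (Or.inl h)
  have hc₀f : c₀ ∉ ({f} : Set V) := fun h => hf (Set.mem_singleton_iff.1 h ▸ hc₀)
  -- A walk from `v` to `c₀` in `G - f` could only leave `S \ (X ∪ Y)` through an attachment
  -- of `C`, and those lie on `P`, hence in `X ∪ Y`.
  have hstay : c₀ ∈ S \ (G.componentIn S w ∪ G.componentIn S u) := by
    refine (hG.reachableIn (by simp) hvf hc₀f).mem_of_forall_adj ⟨hv, hvXY⟩ ?_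
    rintro x ⟨hx, hxXY⟩ y hyf hxy
    by_cases hyC : y ∈ C
    · exact absurd (mem_componentIn_union_of_mem_support hP hCP
        (hattach y hyC x (fun h => hx (Or.inr h)) hxy.symm) (fun h => hx (Or.inl h.symm))) hxXY
    · have hy : y ∈ S := by simpa [S, not_or] using And.intro hyf hyC
      refine ⟨hy, fun hyXY => hxXY ?_⟩
      rcases hyXY with hyX | hyY
      exacts [Or.inl (mem_componentIn_of_adj hyX hxy.symm hx),
        Or.inr (mem_componentIn_of_adj hyY hxy.symm hx)]
  exact hstay.1 (Or.inr hc₀)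

lemma componentIn_left_ssubset (hCP : ∀ x ∈ P.support, x ∉ C) {f g : V}
    (hg : ¬G.ReachableIn (insert g C)ᶜ w u) (hf : f ∈ G.componentIn (insert g C)ᶜ u) :
    G.componentIn (insert g C)ᶜ w ⊂ G.componentIn (insert f C)ᶜ w := by
  classical
  have hgP := mem_support_of_not_reachableIn hCP hg
  have hfX : f ∉ G.componentIn (insert g C)ᶜ w := fun h => hg (h.trans hf.symm)
  have hfg : f ≠ g := fun h => hf.mem_right (Or.inl h)
  -- `g` comes before `f` on `P`, for otherwise the segment of `P` up to `f` puts `f` into `X g`.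
  have hgX : g ∈ G.componentIn (insert f C)ᶜ w := by
    by_contra hgX
    have hf_before : f ∈ (P.takeUntil g hgP).support := by
      by_contra hf_after
      exact hgX (reachableIn_of_walk hCP _ (fun _ hx => P.support_takeUntil_subset_support hgP hx)
        hf_after)
    exact hfX (reachableIn_of_walk hCP _ (fun _ hx => P.support_takeUntil_subset_support _ hx)
      (Walk.notMem_support_takeUntil_support_takeUntil_subset hfg hgP hf_before))
  refine (Set.ssubset_iff_of_subset fun x hx => ?_).2 ⟨g, hgX, fun h => h.mem_right (Or.inl rfl)⟩
  refine hx.reachableIn_componentIn.mono fun y hy => ?_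
  simpa [not_or] using
    And.intro (ne_of_mem_of_not_mem hy hfX) (fun hyC => hy.mem_right (Or.inr hyC))

lemma componentIn_right_ssubset (hCP : ∀ x ∈ P.support, x ∉ C) {f g : V}
    (hg : ¬G.ReachableIn (insert g C)ᶜ w u) (hf : f ∈ G.componentIn (insert g C)ᶜ w) :
    G.componentIn (insert g C)ᶜ u ⊂ G.componentIn (insert f C)ᶜ u :=
  componentIn_left_ssubset (P := P.reverse) (by simpa using hCP) (fun h => hg h.symm) hf

lemma exists_extremal_separators [Fintype V] (hG : IsKConnected G 2) (hP : P.IsPath)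
    (hCP : ∀ x ∈ P.support, x ∉ C) (hattach : ∀ c ∈ C, ∀ z ∉ C, G.Adj c z → z ∈ P.support)
    {c₀ : V} (hc₀ : c₀ ∈ C) {r : V} (hrP : r ∉ P.support) (hrC : r ∉ C) :
    ∃ g h, ¬G.ReachableIn (insert g C)ᶜ w u ∧ ¬G.ReachableIn (insert h C)ᶜ w u ∧
      r ∈ G.componentIn (insert g C)ᶜ u ∧ r ∈ G.componentIn (insert h C)ᶜ w ∧
      ∀ z, ¬G.ReachableIn (insert z C)ᶜ w u → z ∈ G.componentIn (insert g C)ᶜ u →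
        z ∉ G.componentIn (insert h C)ᶜ w := by
  have hcover {f : V} (hf : ¬G.ReachableIn (insert f C)ᶜ w u) :
      r ∈ G.componentIn (insert f C)ᶜ w ∪ G.componentIn (insert f C)ᶜ u := by
    have hfP := mem_support_of_not_reachableIn hCP hf
    refine mem_componentIn_union_of_isKConnected hG hP hCP hattach hc₀ (hCP f hfP) ?_
    rintro (rfl | hr)
    exacts [hrP hfP, hrC hr]
  -- `w` and `u` are separators too, with `X w = Y u = ∅`.
  have hw : ¬G.ReachableIn (insert w C)ᶜ w u := fun h => h.mem_left (Or.inl rfl)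
  have hu : ¬G.ReachableIn (insert u C)ᶜ w u := fun h => h.mem_right (Or.inl rfl)
  obtain ⟨g, ⟨hg, hrg⟩, hgmax⟩ := Set.Finite.exists_maximalFor
    (fun f => (G.componentIn (insert f C)ᶜ w).ncard)
    {f | ¬G.ReachableIn (insert f C)ᶜ w u ∧ r ∈ G.componentIn (insert f C)ᶜ u} (Set.toFinite _)
    ⟨w, hw, (hcover hw).resolve_left fun h => h.mem_left (Or.inl rfl)⟩
  obtain ⟨h, ⟨hh, hrh⟩, hhmax⟩ := Set.Finite.exists_maximalFor
    (fun f => (G.componentIn (insert f C)ᶜ u).ncard)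
    {f | ¬G.ReachableIn (insert f C)ᶜ w u ∧ r ∈ G.componentIn (insert f C)ᶜ w} (Set.toFinite _)
    ⟨u, hu, (hcover hu).resolve_right fun h => h.mem_left (Or.inl rfl)⟩
  refine ⟨g, h, hg, hh, hrg, hrh, fun z hz hzg hzh => ?_⟩
  rcases hcover hz with hrz | hrz
  · have hlt := Set.ncard_lt_ncard (componentIn_right_ssubset hCP hh hzh) (Set.toFinite _)
    exact hlt.not_ge (hhmax ⟨hz, hrz⟩ hlt.le)
  · have hlt := Set.ncard_lt_ncard (componentIn_left_ssubset hCP hg hzg) (Set.toFinite _)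
    exact hlt.not_ge (hgmax ⟨hz, hrz⟩ hlt.le)

theorem mem_of_notMem_support_of_separating [Fintype V] (hG : IsKConnected G 3) (hP : P.IsPath)
    (hCP : ∀ x ∈ P.support, x ∉ C) (hattach : ∀ c ∈ C, ∀ z ∉ C, G.Adj c z → z ∈ P.support)
    (hsep : ∀ c ∈ C, ∀ z ∉ C, G.Adj c z → ¬G.ReachableIn (insert z C)ᶜ w u)
    {c₀ : V} (hc₀ : c₀ ∈ C) {r : V} (hrP : r ∉ P.support) : r ∈ C := by
  by_contra hrC
  obtain ⟨g, h, hg, hh, hrg, hrh, hextremal⟩ :=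
    exists_extremal_separators (hG.anti (by norm_num)) hP hCP hattach hc₀ hrP hrC
  set M := G.componentIn (insert g C)ᶜ u ∩ G.componentIn (insert h C)ᶜ w
  have hMC : ∀ m ∈ M, m ∉ C := fun m hm hmC => hm.1.mem_right (Or.inr hmC)
  have hM : ∀ m ∈ M, ∀ q ∈ ({g, h} : Set V)ᶜ, G.Adj m q → q ∈ M := by
    intro m hm q hq hmq
    have hqC : q ∉ C := fun hqC =>
      hextremal m (hsep q hqC m (hMC m hm) hmq.symm) hm.1 hm.2
    simp only [Set.mem_compl_iff, Set.mem_insert_iff, Set.mem_singleton_iff, not_or] at hq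
    exact ⟨mem_componentIn_of_adj hm.1 hmq (by simp [hq.1, hqC]),
      mem_componentIn_of_adj hm.2 hmq (by simp [hq.2, hqC])⟩
  have hgP := mem_support_of_not_reachableIn hCP hg
  have hhP := mem_support_of_not_reachableIn hCP hh
  have hcard : ({g, h} : Set V).ncard < 3 := (Set.ncard_insert_le _ _).trans_lt (by simp)
  have hr : r ∉ ({g, h} : Set V) := by
    rintro (rfl | rfl)
    exacts [hrP hgP, hrP hhP]
  have hc₀' : c₀ ∉ ({g, h} : Set V) := by
    rintro (rfl | rfl)
    exacts [hCP _ hgP hc₀, hCP _ hhP hc₀]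
  exact hMC c₀ ((hG.reachableIn hcard hr hc₀').mem_of_forall_adj ⟨hrg, hrh⟩ hM) hc₀

end SimpleGraph

theorem stmt17_general {V : Type*} [Fintype V] (G : SimpleGraph V)
    (hconn : IsKConnected G 3) (w u : V) :
    ∃ P : G.Walk w u, P.IsPath ∧
      (∀ x ∈ P.support, ∀ y ∈ P.support, G.Adj x y → s(x, y) ∈ P.edges) ∧
      (G.induce {v : V | v ∉ P.support}).Connected := by
  obtain ⟨P, c₀, ⟨hP, hPc, hc₀⟩, hmax⟩ := exists_isChordless_isPath_max_componentIn hconn w u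
  set C := G.componentIn {x | x ∉ P.support} c₀
  have hCP : ∀ x ∈ P.support, x ∉ C := fun x hx hxC => hxC.mem_right hx
  have hattach : ∀ c ∈ C, ∀ z ∉ C, G.Adj c z → z ∈ P.support := fun c hc z hz hcz =>
    by_contra fun hzP => hz (mem_componentIn_of_adj hc hcz hzP)
  have hsep : ∀ c ∈ C, ∀ z ∉ C, G.Adj c z → ¬G.ReachableIn (insert z C)ᶜ w u :=
    fun c hc z hz hcz => not_reachableIn_of_max_componentIn hmax hc hz hcz
  refine ⟨P, hP, fun x hx y hy => hPc.mem_edges hx hy, ?_⟩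
  exact induce_connected_of_forall_reachableIn hc₀ fun r hr =>
    mem_of_notMem_support_of_separating hconn hP hCP hattach hsep (ReachableIn.refl hc₀) hr

/-- (Tutte) For every 3-connected graph `G` and nonadjacent vertices `w, u`, there is a
chordless path `P` from `w` to `u` such that `G - V(P)` is connected. -/
theorem stmt17 {V : Type*} [Fintype V] (G : SimpleGraph V)
    (hconn : IsKConnected G 3) (w u : V) (hne : w ≠ u) (hna : ¬ G.Adj w u) :
    ∃ P : G.Walk w u, P.IsPath ∧
      (∀ x ∈ P.support, ∀ y ∈ P.support, G.Adj x y → s(x, y) ∈ P.edges) ∧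
      (G.induce {v : V | v ∉ P.support}).Connected :=
  stmt17_general G hconn w u
end
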